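/- arXiv:1810.05317 — 4 statements merged into one kernel-verified Lean document; each statement's English description precedes it below -/
import Mathlib

section
/- If G is a finite simple graph such that for every k the number of independent sets of size k in G equals the number of independent sets of size k in the cycle C_6, then G is isomorphic to C_6, or to D_6, or to the disjoint union of K_4 minus one edge with K_2. -/
open SimpleGraph Polynomial Finset

/-- The number of independent sets of size `k` in the graph `G`. -/
noncomputable def indepCount {V : Type*} [Fintype V] (G : SimpleGraph V) (k : ℕ) : ℕ :=
  Nat.card {s : Finset V // s.card = k ∧ ∀ u ∈ s, ∀ v ∈ s, ¬ G.Adj u v}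

/-- The graph `D_n`: a triangle on the vertices `0, 1, 2` together with the
pendant path `2 - 3 - ⋯ - (n-1)`. -/
def dGraph (n : ℕ) : SimpleGraph (Fin n) :=
  SimpleGraph.fromRel (fun u v =>
    (u.val = 0 ∧ v.val = 1) ∨ (u.val = 0 ∧ v.val = 2) ∨ (u.val = 1 ∧ v.val = 2) ∨
    (2 ≤ u.val ∧ v.val = u.val + 1))

/-- The complete graph on four vertices with one edge removed. -/
def k4MinusEdge : SimpleGraph (Fin 4) :=
  (⊤ : SimpleGraph (Fin 4)).deleteEdges {s(0, 1)}

def pidx (i j : Nat) : Nat := (11 - i) * i / 2 + j - i - 1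

def adjB (n i j : Nat) : Bool :=
  if i < j then n.testBit (pidx i j) else if j < i then n.testBit (pidx j i) else false

def decodeGraph (n : Nat) : SimpleGraph (Fin 6) where
  Adj i j := adjB n i.val j.val = true
  symm := by
    constructor
    intro i j hij
    show adjB n j.val i.val = true
    unfold adjB at hij ⊢
    rcases lt_trichotomy i.val j.val with h | h | h
    · rw [if_pos h] at hij
      rw [if_neg (by omega), if_pos h]; exact hij
    · rw [if_neg (by omega), if_neg (by omega)] at hij; exact absurd hij (by simp)
    · rw [if_neg (by omega), if_pos h] at hij
      rw [if_pos h]; exact hij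
  loopless := by constructor; intro i; simp [adjB]

instance decodeAdjDec (n : Nat) : DecidableRel (decodeGraph n).Adj :=
  fun i j => inferInstanceAs (Decidable (adjB n i.val j.val = true))

def enc : Nat → (Nat → Bool) → Nat
  | 0, _ => 0
  | m+1, f => 2 * enc m (fun t => f (t+1)) + (f 0).toNat

theorem enc_lt (m : Nat) (f : Nat → Bool) : enc m f < 2 ^ m := by
  induction m generalizing f with
  | zero => simp [enc]
  | succ m ih =>
    have h := ih (fun t => f (t+1))
    have hb : (f 0).toNat ≤ 1 := Bool.toNat_le _
    simp only [enc, pow_succ]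
    omega

theorem tb_enc (m : Nat) (f : Nat → Bool) (t : Nat) :
    (enc m f).testBit t = (decide (t < m) && f t) := by
  induction m generalizing f t with
  | zero => simp [enc]
  | succ m ih =>
    cases t with
    | zero =>
      simp only [enc, Nat.testBit_zero]
      have hb : (f 0).toNat ≤ 1 := Bool.toNat_le _
      cases hf : f 0 <;> simp [hf, Nat.mul_add_mod, Bool.toNat] <;> omega
    | succ t =>
      rw [enc, Nat.testBit_succ]
      have h2 : (2 * enc m (fun t => f (t+1)) + (f 0).toNat) / 2 = enc m (fun t => f (t+1)) := by
        have hb : (f 0).toNat ≤ 1 := Bool.toNat_le _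
        omega
      rw [h2, ih]
      simp [Nat.succ_lt_succ_iff]

def pAF : Nat → Fin 6
  | 0=>0|1=>0|2=>0|3=>0|4=>0|5=>1|6=>1|7=>1|8=>1|9=>2|10=>2|11=>2|12=>3|13=>3|_=>4
def pBF : Nat → Fin 6
  | 0=>1|1=>2|2=>3|3=>4|4=>5|5=>2|6=>3|7=>4|8=>5|9=>3|10=>4|11=>5|12=>4|13=>5|_=>5

def F (s : Finset (Fin 6)) : Nat := enc 15 fun t => decide (pAF t ∈ s ∧ pBF t ∈ s)

theorem fact1 : ∀ u v : Fin 6, u.val < v.val →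
    pidx u.val v.val < 15 ∧ pAF (pidx u.val v.val) = u ∧ pBF (pidx u.val v.val) = v := by decide

theorem fact2 : ∀ t : Nat, t < 15 →
    (pAF t).val < (pBF t).val ∧ pidx (pAF t).val (pBF t).val = t := by decide

theorem tb_F (s : Finset (Fin 6)) (u v : Fin 6) (huv : u.val < v.val) :
    (F s).testBit (pidx u.val v.val) = (decide (u ∈ s) && decide (v ∈ s)) := by
  obtain ⟨h15, hA, hB⟩ := fact1 u v huv
  rw [F, tb_enc, decide_eq_true h15, Bool.true_and, hA, hB]
  simp

theorem adjB_lt (n : Nat) (u v : Fin 6) (huv : u.val < v.val) :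
    adjB n u.val v.val = n.testBit (pidx u.val v.val) := by rw [adjB, if_pos huv]

theorem indep_iff (n : Nat) (s : Finset (Fin 6)) :
    (∀ u ∈ s, ∀ v ∈ s, ¬ (decodeGraph n).Adj u v) ↔ n &&& F s = 0 := by
  constructor
  · intro hind
    apply Nat.eq_of_testBit_eq
    intro t
    rw [Nat.testBit_land, Nat.zero_testBit]
    by_cases h15 : t < 15
    · obtain ⟨hlt, hpidx⟩ := fact2 t h15
      by_cases hmem : pAF t ∈ s ∧ pBF t ∈ s
      · have := hind _ hmem.1 _ hmem.2
        have hadj : (decodeGraph n).Adj (pAF t) (pBF t) ↔ n.testBit t = true := by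
          show adjB n _ _ = true ↔ _
          rw [adjB_lt n _ _ hlt, hpidx]
        simp only [hadj] at this
        simp [Bool.eq_false_iff.mpr this]
      · have : (F s).testBit t = false := by
          rw [F, tb_enc, decide_eq_true h15, Bool.true_and, decide_eq_false hmem]
        simp [this]
    · have : (F s).testBit t = false := by
        rw [F, tb_enc, decide_eq_false h15, Bool.false_and]
      simp [this]
  · intro h0 u hu v hv hadj
    have key : ∀ a b : Fin 6, a.val < b.val → a ∈ s → b ∈ s →
        n.testBit (pidx a.val b.val) = true → False := by
      intro a b hab ha hb htb
      have hF : (F s).testBit (pidx a.val b.val) = true := by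
        rw [tb_F s a b hab, decide_eq_true ha, decide_eq_true hb]; rfl
      have := congrArg (fun m => m.testBit (pidx a.val b.val)) h0
      simp only [Nat.testBit_land, Nat.zero_testBit, htb, hF] at this
      simp at this
    have hadj' : adjB n u.val v.val = true := hadj
    rcases lt_trichotomy u.val v.val with h | h | h
    · rw [adjB, if_pos h] at hadj'
      exact key u v h hu hv hadj'
    · rw [adjB, if_neg (by omega), if_neg (by omega)] at hadj'
      exact Bool.false_ne_true hadj'
    · rw [adjB, if_neg (by omega), if_pos h] at hadj'
      exact key v u h hv hu hadj'

theorem F_mem (s t : Finset (Fin 6)) (hF : F s = F t) (u v : Fin 6) (huv : u.val < v.val)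
    (hu : u ∈ s) (hv : v ∈ s) : u ∈ t ∧ v ∈ t := by
  have h1 := tb_F s u v huv
  have h2 := tb_F t u v huv
  rw [hF, h2, decide_eq_true hu, decide_eq_true hv] at h1
  simp only [Bool.and_eq_true, decide_eq_true_eq, Bool.true_and] at h1
  exact h1

theorem F_injOn (k : Nat) (hk : 2 ≤ k) :
    Set.InjOn F {s : Finset (Fin 6) | s.card = k} := by
  have main : ∀ s t : Finset (Fin 6), s.card = k → F s = F t → s ⊆ t := by
    intro s t hs hF x hx
    have hlt : 1 < s.card := by omega
    obtain ⟨y, hy, hyx⟩ := Finset.exists_mem_ne hlt x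
    rcases lt_trichotomy x.val y.val with h | h | h
    · exact (F_mem s t hF x y h hx hy).1
    · exact absurd (Fin.ext h) (Ne.symm hyx)
    · exact (F_mem s t hF y x h hy hx).2
  intro s hs t ht hF
  exact Finset.Subset.antisymm (main s t hs hF) (main t s ht hF.symm)

theorem indepCount_congr {V W : Type*} [Fintype V] [Fintype W] {G : SimpleGraph V}
    {H : SimpleGraph W} (e : G ≃g H) (k : ℕ) : indepCount G k = indepCount H k := by
  apply Nat.card_congr
  refine Equiv.subtypeEquiv (Equiv.finsetCongr e.toEquiv) fun s => ?_
  simp only [Equiv.finsetCongr_apply]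
  refine and_congr ?_ ?_
  · rw [Finset.card_map]
  · constructor
    · intro hs u hu v hv hadj
      simp only [Finset.mem_map, Equiv.coe_toEmbedding] at hu hv
      obtain ⟨a, ha, rfl⟩ := hu
      obtain ⟨b, hb, rfl⟩ := hv
      exact hs a ha b hb (e.map_rel_iff.mp hadj)
    · intro hs a ha b hb hadj
      refine hs (e.toEquiv a) ?_ (e.toEquiv b) ?_ (e.map_rel_iff.mpr hadj)
      · exact Finset.mem_map_of_mem _ ha
      · exact Finset.mem_map_of_mem _ hb

theorem indepCount_one {V : Type*} [Fintype V] (G : SimpleGraph V) :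
    indepCount G 1 = Fintype.card V := by
  rw [← Nat.card_eq_fintype_card]
  apply Nat.card_congr
  apply Equiv.symm
  refine Equiv.ofBijective (fun v => ⟨{v}, Finset.card_singleton v, ?_⟩) ⟨?_, ?_⟩
  · intro u hu w hw
    simp only [Finset.mem_singleton] at hu hw
    subst hu; subst hw
    exact G.irrefl
  · intro u v huv
    simpa using congrArg (fun s => s.1) huv
  · intro ⟨s, hs, _⟩
    obtain ⟨a, rfl⟩ := Finset.card_eq_one.mp hs
    exact ⟨a, rfl⟩

theorem indepCount_eq_card (G : SimpleGraph (Fin 6)) [DecidableRel G.Adj] (k : ℕ) :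
    indepCount G k =
      (Finset.univ.filter fun s : Finset (Fin 6) => s.card = k ∧ ∀ u ∈ s, ∀ v ∈ s, ¬ G.Adj u v).card := by
  rw [indepCount, Nat.card_eq_fintype_card, Fintype.card_subtype]

theorem bridge (n k : ℕ) (hk : 2 ≤ k) (l : List ℕ) (hnd : l.Nodup)
    (him : (Finset.univ.filter fun s : Finset (Fin 6) => s.card = k).image F = ⟨↑l, hnd⟩) :
    indepCount (decodeGraph n) k = l.countP fun P => decide (n &&& P = 0) := by
  rw [indepCount_eq_card]
  have hfil : (Finset.univ.filter fun s : Finset (Fin 6) =>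
      s.card = k ∧ ∀ u ∈ s, ∀ v ∈ s, ¬ (decodeGraph n).Adj u v) =
      (Finset.univ.filter fun s : Finset (Fin 6) => s.card = k).filter
        (fun s => n &&& F s = 0) := by
    rw [Finset.filter_filter]
    apply Finset.filter_congr
    intro s _
    simp only [indep_iff n s]
  rw [hfil]
  have hinj : Set.InjOn F ((Finset.univ.filter fun s : Finset (Fin 6) => s.card = k).filter
      (fun s => n &&& F s = 0) : Finset (Finset (Fin 6))) := by
    intro s hs t ht
    simp only [Finset.coe_filter, Set.mem_setOf_eq, Finset.mem_filter] at hs ht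
    exact F_injOn k hk hs.1.2 ht.1.2
  have key : ((Finset.univ.filter fun s : Finset (Fin 6) => s.card = k).filter
      (fun s => n &&& F s = 0)).image F
      = Finset.filter (fun P => n &&& P = 0) ⟨↑l, hnd⟩ := by
    rw [← him]
    ext P
    simp only [Finset.mem_image, Finset.mem_filter, Finset.mem_univ, true_and]
    constructor
    · rintro ⟨s, ⟨hs, hP⟩, rfl⟩; exact ⟨⟨s, hs, rfl⟩, hP⟩
    · rintro ⟨⟨s, hs, rfl⟩, hP⟩; exact ⟨s, ⟨hs, hP⟩, rfl⟩
  calc ((Finset.univ.filter fun s : Finset (Fin 6) => s.card = k).filter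
          (fun s => n &&& F s = 0)).card
      = (((Finset.univ.filter fun s : Finset (Fin 6) => s.card = k).filter
          (fun s => n &&& F s = 0)).image F).card := (Finset.card_image_of_injOn hinj).symm
    _ = (Finset.filter (fun P => n &&& P = 0) ⟨↑l, hnd⟩).card := by rw [key]
    _ = l.countP fun P => decide (n &&& P = 0) := by
        simp only [Finset.filter, Finset.card_mk, Multiset.filter_coe, Multiset.coe_card,
          List.countP_eq_length_filter]

def L2 : List Nat := [1, 2, 4, 8, 16, 32, 64, 128, 256, 512, 1024, 2048, 4096, 8192, 16384]
def L3 : List Nat := [35, 69, 137, 273, 518, 1034, 2066, 4108, 8212, 16408, 608, 1184, 2336, 4288, 8512, 16768, 5632, 10752, 19456, 28672]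
def L4 : List Nat := [615, 1195, 2355, 4301, 8533, 16793, 5646, 10774, 19482, 28700, 5856, 11104, 19872, 29120, 32256]

theorem L2nodup : L2.Nodup := by decide
theorem L3nodup : L3.Nodup := by decide
theorem L4nodup : L4.Nodup := by decide

theorem him2 : (Finset.univ.filter fun s : Finset (Fin 6) => s.card = 2).image F
    = ⟨↑L2, L2nodup⟩ := by decide +kernel
theorem him3 : (Finset.univ.filter fun s : Finset (Fin 6) => s.card = 3).image F
    = ⟨↑L3, L3nodup⟩ := by decide +kernel
theorem him4 : (Finset.univ.filter fun s : Finset (Fin 6) => s.card = 4).image F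
    = ⟨↑L4, L4nodup⟩ := by decide +kernel

def goodC : List (Nat × Nat) := [(1880, 15060), (1940, 12900), (2776, 40980), (2956, 25860), (3284, 43140), (3404, 30180), (4920, 15240), (5010, 12720), (5428, 14160), (5458, 13800), (6264, 15210), (6324, 14130), (6474, 22950), (6534, 21870), (6801, 42270), (6921, 23010), (7249, 43350), (7429, 21930), (8888, 41160), (9098, 25680), (9336, 41130), (9426, 42390), (9516, 33570), (9606, 34830), (9873, 42450), (9993, 22830), (10412, 33600), (10442, 33240), (11337, 30390), (11397, 34890), (12466, 43680), (12586, 30720), (13361, 43710), (13571, 21570), (14377, 30750), (14467, 34530), (17076, 44370), (17106, 44550), (17196, 37890), (17226, 38070), (17524, 44400), (17734, 28920), (18001, 44610), (18181, 20670), (18540, 37920), (18630, 35400), (19017, 38130), (19077, 27150), (20594, 44760), (20774, 29640), (21041, 44790), (21251, 20490), (22565, 29670), (22595, 35610), (24682, 38280), (24742, 36120), (25129, 38310), (25219, 26970), (25637, 36150), (25667, 29130)]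
def goodD : List (Nat × Nat) := [(760, 43000), (888, 30040), (910, 43010), (918, 30050), (1268, 40840), (1358, 40850), (1370, 25730), (1460, 25720), (1656, 43060), (1716, 40900), (1813, 15050), (1817, 12890), (1866, 40920), (1873, 15060), (1926, 43080), (1937, 12900), (2262, 14930), (2266, 12770), (2412, 14920), (2476, 12760), (2680, 30100), (2701, 40970), (2713, 25850), (2761, 40980), (2770, 15000), (2860, 14980), (2950, 30120), (2953, 25860), (3149, 43130), (3157, 30170), (3252, 25780), (3269, 43140), (3282, 12840), (3372, 12820), (3397, 30180), (3402, 25800), (4338, 40300), (4398, 40310), (4412, 24830), (4562, 24820), (4728, 43240), (4818, 40720), (4883, 15230), (4889, 12710), (4908, 40740), (4913, 15240), (4998, 43260), (5009, 12720), (5300, 42160), (5330, 41800), (5395, 14150), (5397, 13790), (5420, 41820), (5425, 14160), (5450, 42180), (5457, 13800), (5681, 40270), (5713, 40630), (5777, 41710), (5891, 40275), (5893, 40635), (5897, 41715), (5906, 32505), (5908, 32865), (5912, 33945), (5936, 32495), (5968, 32855), (6032, 33935), (6189, 40340), (6204, 24800), (6227, 15140), (6234, 12560), (6252, 40770), (6258,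 15210), (6291, 14060), (6294, 13640), (6316, 41850), (6322, 14130), (6339, 40335), (6342, 40755), (6346, 41835), (6353, 32595), (6356, 33015), (6360, 34095), (6384, 32525), (6413, 32600), (6414, 32540), (6437, 15135), (6438, 15195), (6441, 14055), (6442, 14115), (6452, 22935), (6456, 21855), (6476, 33030), (6482, 22950), (6504, 13625), (6540, 34110), (6546, 21870), (6564, 12545), (6594, 24785), (6793, 42270), (6802, 13710), (6864, 32945), (6924, 32970), (6929, 23010), (6952, 13685), (7237, 43350), (7250, 12630), (7376, 34025), (7436, 34050), (7441, 21930), (7460, 12605), (7697, 24730), (7937, 24725), (8374, 14390), (8380, 11870), (8554, 14380), (8650, 11860), (8824, 30280), (8843, 41150), (8857, 25670), (8873, 41160), (8884, 14820), (9034, 14800), (9094, 30300), (9097, 25680), (9269, 14420), (9276, 11840), (9291, 41060), (9306, 25520), (9322, 41130), (9332, 14850), (9365, 13160), (9366, 13100), (9381, 41055), (9382, 41115), (9388, 42375), (9393, 33495), (9394, 33555), (9400, 34815), (9418, 42390), (9428, 13590), (9456, 33065), (9483, 33500), (9486, 33080), (9514, 33570), (9524, 22410), (9539, 14415), (9542,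 14835), (9545, 13155), (9548, 13575), (9554, 22395), (9560, 21135), (9576, 13085), (9610, 34830), (9620, 21150), (9636, 25505), (9666, 11825), (9865, 42450), (9876, 13530), (9904, 33125), (9994, 33150), (10001, 22830), (10056, 13505), (10379, 33590), (10381, 33230), (10409, 33600), (10420, 22380), (10441, 33240), (10450, 22740), (10540, 22720), (10570, 22360), (10793, 14350), (10825, 14710), (10883, 14355), (10885, 14715), (10890, 13065), (10892, 13425), (10897, 22275), (10904, 20985), (10920, 13055), (10952, 13415), (11017, 22270), (11144, 20975), (11333, 30390), (11338, 25590), (11401, 34890), (11412, 21090), (11428, 25565), (11592, 21065), (11785, 11770), (11905, 11765), (12331, 43670), (12339, 30710), (12451, 43680), (12468, 12300), (12498, 25240), (12579, 30720), (12588, 25260), (12618, 12280), (13347, 43710), (13364, 12270), (13488, 34385), (13578, 34410), (13585, 21570), (13634, 12245), (13841, 25090), (14081, 25085), (14371, 30750), (14380, 25230), (14473, 34530), (14482, 21450), (14530, 25205), (14632, 21425), (14857, 12130), (14977, 12125), (16506, 8990), (16508, 8630), (16806, 8980), (16838, 8620), (16953, 9020), (16956, 8600), (16985, 8840), (16986,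 8780), (17001, 44295), (17002, 44355), (17004, 44535), (17009, 37815), (17010, 37875), (17012, 38055), (17031, 44300), (17046, 28760), (17062, 44370), (17080, 11610), (17094, 44550), (17112, 11430), (17136, 35225), (17159, 37820), (17166, 35240), (17190, 37890), (17208, 18090), (17222, 38070), (17240, 17910), (17256, 28745), (17283, 9015), (17285, 8835), (17290, 11595), (17292, 11415), (17298, 18075), (17300, 17895), (17316, 8765), (17346, 8585), (17479, 44390), (17493, 28910), (17509, 44400), (17528, 11580), (17588, 27040), (17733, 28920), (17738, 27060), (17798, 11560), (17989, 44610), (18008, 11370), (18032, 35285), (18182, 35310), (18193, 20670), (18308, 11345), (18503, 37910), (18509, 35390), (18533, 37920), (18552, 18060), (18629, 35400), (18642, 20580), (18732, 20560), (18822, 18040), (19013, 38130), (19032, 17850), (19048, 28805), (19078, 28830), (19081, 27150), (19332, 17825), (19493, 8950), (19523, 8955), (19526, 8745), (19529, 11475), (19532, 11265), (19537, 17955), (19540, 17745), (19556, 8735), (19589, 11470), (19652, 11255), (19717, 17950), (19780, 17735), (19973, 8530), (20033, 8525), (20519, 44750), (20531, 29630), (20579, 44760), (20600, 11220), (20690,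 26320), (20771, 29640), (20780, 26340), (20870, 11200), (21027, 44790), (21048, 11190), (21104, 35465), (21254, 35490), (21265, 20490), (21378, 11165), (22033, 26170), (22273, 26165), (22563, 29670), (22572, 26310), (22597, 35610), (22610, 20370), (22722, 26285), (22820, 20345), (23557, 11050), (23617, 11045), (24615, 38270), (24619, 36110), (24675, 38280), (24696, 17700), (24739, 36120), (24756, 19860), (24906, 19840), (24966, 17680), (25123, 38310), (25144, 17670), (25192, 28985), (25222, 29010), (25225, 26970), (25474, 17645), (25635, 36150), (25652, 19830), (25669, 29130), (25674, 26850), (25764, 26825), (25922, 19805), (27145, 19690), (27265, 19685), (27653, 17530), (27713, 17525), (28709, 8415), (28710, 8385), (28713, 10575), (28714, 10545), (28721, 17055), (28722, 17025), (28739, 8410), (28770, 8375), (28803, 10570), (28834, 10535), (28931, 17050), (28962, 17015), (29187, 8350), (29217, 8345), (29699, 10510), (29729, 10505), (30723, 16990), (30753, 16985)]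
def goodK : List (Nat × Nat) := [(921, 9020), (1365, 14420), (1776, 40300), (1806, 40310), (2253, 40340), (2710, 14390), (2920, 14380), (3162, 8990), (3492, 8980), (4403, 15140), (4848, 40840), (4878, 40850), (5360, 43000), (5390, 43010), (5744, 40900), (5808, 43060), (5840, 43240), (5894, 40920), (5898, 43080), (5900, 43260), (6195, 15230), (6221, 40970), (6285, 43130), (6341, 40980), (6345, 43140), (6348, 43350), (6419, 30710), (6435, 15240), (6449, 30720), (6450, 30750), (8363, 41060), (8854, 14930), (9064, 14920), (9259, 41150), (9301, 15050), (9355, 43670), (9379, 41160), (9385, 43680), (9386, 43710), (9493, 30170), (9541, 15060), (9553, 30180), (9556, 30390), (10390, 30050), (10600, 30040), (10856, 14980), (10886, 15000), (10898, 30120), (10900, 30300), (11048, 30100), (11080, 30280), (12348, 8630), (12738, 8620), (15873, 8530), (16487, 44300), (16935, 44390), (16967, 44750), (16995, 44400), (16997, 44760), (16998, 44790), (17049, 12890), (17177, 25850), (17289, 12900), (17297, 25860), (17304, 27150), (17498, 12770), (17828, 12760), (18522, 25730), (18852, 25720), (19530, 12840), (19538, 25800), (19544, 27060), (19620, 12820),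 (19748, 25780), (19844, 27040), (20540, 11870), (20930, 11860), (24065, 11770), (24636, 24830), (25026, 24820), (28161, 24730), (28716, 12300), (28724, 25260), (28728, 26340), (28866, 12280), (28994, 25240), (29058, 26320), (30209, 12130), (31233, 25090), (31745, 26170)]

def countB2 (n : ℕ) : ℕ := L2.countP fun P => decide (n &&& P = 0)
def countB3 (n : ℕ) : ℕ := L3.countP fun P => decide (n &&& P = 0)
def countB4 (n : ℕ) : ℕ := L4.countP fun P => decide (n &&& P = 0)

def good (n : ℕ) : Bool :=
  goodC.any (fun x => n == x.1) || goodD.any (fun x => n == x.1) || goodK.any (fun x => n == x.1)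

def check (n : ℕ) : Bool :=
  if countB3 n = 2 then
    if countB2 n = 9 then if countB4 n = 0 then good n else true else true
  else true

theorem chunk0 : ∀ r < 2048, check (2048 * 0 + r) = true := by decide +kernel
theorem chunk1 : ∀ r < 2048, check (2048 * 1 + r) = true := by decide +kernel
theorem chunk2 : ∀ r < 2048, check (2048 * 2 + r) = true := by decide +kernel
theorem chunk3 : ∀ r < 2048, check (2048 * 3 + r) = true := by decide +kernel
theorem chunk4 : ∀ r < 2048, check (2048 * 4 + r) = true := by decide +kernel
theorem chunk5 : ∀ r < 2048, check (2048 * 5 + r) = true := by decide +kernel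
theorem chunk6 : ∀ r < 2048, check (2048 * 6 + r) = true := by decide +kernel
theorem chunk7 : ∀ r < 2048, check (2048 * 7 + r) = true := by decide +kernel
theorem chunk8 : ∀ r < 2048, check (2048 * 8 + r) = true := by decide +kernel
theorem chunk9 : ∀ r < 2048, check (2048 * 9 + r) = true := by decide +kernel
theorem chunk10 : ∀ r < 2048, check (2048 * 10 + r) = true := by decide +kernel
theorem chunk11 : ∀ r < 2048, check (2048 * 11 + r) = true := by decide +kernel
theorem chunk12 : ∀ r < 2048, check (2048 * 12 + r) = true := by decide +kernel
theorem chunk13 : ∀ r < 2048, check (2048 * 13 + r) = true := by decide +kernel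
theorem chunk14 : ∀ r < 2048, check (2048 * 14 + r) = true := by decide +kernel
theorem chunk15 : ∀ r < 2048, check (2048 * 15 + r) = true := by decide +kernel

theorem mainSweep : ∀ n < 32768, check n = true := by
  intro n hn
  obtain ⟨q, r, hq, hr, rfl⟩ : ∃ q r, q < 16 ∧ r < 2048 ∧ n = 2048 * q + r :=
    ⟨n / 2048, n % 2048, by omega, by omega, by omega⟩
  interval_cases q
  · exact chunk0 r hr
  · exact chunk1 r hr
  · exact chunk2 r hr
  · exact chunk3 r hr
  · exact chunk4 r hr
  · exact chunk5 r hr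
  · exact chunk6 r hr
  · exact chunk7 r hr
  · exact chunk8 r hr
  · exact chunk9 r hr
  · exact chunk10 r hr
  · exact chunk11 r hr
  · exact chunk12 r hr
  · exact chunk13 r hr
  · exact chunk14 r hr
  · exact chunk15 r hr

def fFn (p : ℕ) : Fin 6 → Fin 6 := fun i => ⟨p / 6 ^ i.val % 6, Nat.mod_lt _ (by norm_num)⟩

def relabelOK (n p t : ℕ) : Bool :=
  decide (Function.Injective (fFn p)) &&
  decide (∀ i j : Fin 6, (decodeGraph n).Adj i j ↔ (decodeGraph t).Adj (fFn p i) (fFn p j))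

theorem isoOfRelabel {n p t : ℕ} (h : relabelOK n p t = true) :
    Nonempty (decodeGraph n ≃g decodeGraph t) := by
  rw [relabelOK, Bool.and_eq_true] at h
  have hinj := of_decide_eq_true h.1
  have hrel := of_decide_eq_true h.2
  have hbij : Function.Bijective (fFn p) :=
    (Fintype.bijective_iff_injective_and_card (fFn p)).mpr ⟨hinj, rfl⟩
  exact ⟨⟨Equiv.ofBijective (fFn p) hbij, fun {a b} => (hrel a b).symm⟩⟩

theorem allC : ∀ x ∈ goodC, relabelOK x.1 x.2 21041 = true := by decide +kernel
theorem allD : ∀ x ∈ goodD, relabelOK x.1 x.2 21027 = true := by decide +kernel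
theorem allK : ∀ x ∈ goodK, relabelOK x.1 x.2 16998 = true := by decide +kernel

theorem cycle_eq : decodeGraph 21041 = SimpleGraph.cycleGraph 6 := by
  have : ∀ u v : Fin 6, (decodeGraph 21041).Adj u v ↔ (SimpleGraph.cycleGraph 6).Adj u v := by
    decide
  exact SimpleGraph.ext (funext fun u => funext fun v => propext (this u v))

instance : DecidableRel (dGraph 6).Adj :=
  fun a b => decidable_of_iff' _ (SimpleGraph.fromRel_adj _ a b)

theorem dGraph_eq : decodeGraph 21027 = dGraph 6 := by
  have : ∀ u v : Fin 6, (decodeGraph 21027).Adj u v ↔ (dGraph 6).Adj u v := by decide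
  exact SimpleGraph.ext (funext fun u => funext fun v => propext (this u v))

instance : DecidableRel (⊤ : SimpleGraph (Fin 4)).Adj :=
  fun a b => inferInstanceAs (Decidable (a ≠ b))

instance : DecidableRel (⊤ : SimpleGraph (Fin 2)).Adj :=
  fun a b => inferInstanceAs (Decidable (a ≠ b))

instance : DecidableRel k4MinusEdge.Adj := fun a b =>
  decidable_of_iff ((⊤ : SimpleGraph (Fin 4)).Adj a b ∧ ¬ s(a, b) = s(0, 1)) (by
    rw [k4MinusEdge, SimpleGraph.deleteEdges_adj]
    simp [Set.mem_singleton_iff])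

instance : DecidableRel (k4MinusEdge ⊕g (⊤ : SimpleGraph (Fin 2))).Adj := fun a b =>
  match a, b with
  | Sum.inl u, Sum.inl v => inferInstanceAs (Decidable (k4MinusEdge.Adj u v))
  | Sum.inl _, Sum.inr _ => inferInstanceAs (Decidable (false = true))
  | Sum.inr _, Sum.inl _ => inferInstanceAs (Decidable (false = true))
  | Sum.inr u, Sum.inr v => inferInstanceAs (Decidable (u ≠ v))

theorem kIso : Nonempty (decodeGraph 16998 ≃g (k4MinusEdge ⊕g (⊤ : SimpleGraph (Fin 2)))) := by
  refine ⟨⟨(finSumFinEquiv (m := 4) (n := 2)).symm, ?_⟩⟩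
  have : ∀ a b : Fin 6, (k4MinusEdge ⊕g (⊤ : SimpleGraph (Fin 2))).Adj
      (finSumFinEquiv.symm a) (finSumFinEquiv.symm b) ↔ (decodeGraph 16998).Adj a b := by decide
  intro a b
  exact this a b

noncomputable def encodeG (H : SimpleGraph (Fin 6)) : ℕ :=
  enc 15 fun t => @decide (H.Adj (pAF t) (pBF t)) (Classical.propDecidable _)

theorem encodeG_lt (H : SimpleGraph (Fin 6)) : encodeG H < 32768 := by
  have := enc_lt 15 (fun t => @decide (H.Adj (pAF t) (pBF t)) (Classical.propDecidable _))
  norm_num at this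
  exact this

theorem decode_encode (H : SimpleGraph (Fin 6)) : decodeGraph (encodeG H) = H := by
  refine SimpleGraph.ext (funext fun u => funext fun v => propext ?_)
  show adjB (encodeG H) u.val v.val = true ↔ H.Adj u v
  rcases lt_trichotomy u.val v.val with h | h | h
  · rw [adjB_lt _ _ _ h, encodeG, tb_enc]
    obtain ⟨h15, hA, hB⟩ := fact1 u v h
    rw [decide_eq_true h15, Bool.true_and, hA, hB]
    exact ⟨fun hh => @of_decide_eq_true _ (Classical.propDecidable _) hh, fun hh => @decide_eq_true _ (Classical.propDecidable _) hh⟩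
  · have : u = v := Fin.ext h
    subst this
    rw [adjB]
    simp [H.irrefl]
  · rw [adjB, if_neg (by omega), if_pos h, encodeG, tb_enc]
    obtain ⟨h15, hA, hB⟩ := fact1 v u h
    rw [decide_eq_true h15, Bool.true_and, hA, hB]
    exact ⟨fun hh => H.adj_symm (@of_decide_eq_true _ (Classical.propDecidable _) hh), fun hh => @decide_eq_true _ (Classical.propDecidable _) (H.adj_symm hh)⟩

theorem hc2 : countB2 21041 = 9 := by decide +kernel
theorem hc3 : countB3 21041 = 2 := by decide +kernel
theorem hc4 : countB4 21041 = 0 := by decide +kernel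

theorem indepEquiv_sixCycle {V : Type*} [Fintype V] (G : SimpleGraph V)
    (h : ∀ k, indepCount G k = indepCount (SimpleGraph.cycleGraph 6) k) :
    Nonempty (G ≃g SimpleGraph.cycleGraph 6) ∨ Nonempty (G ≃g dGraph 6) ∨
      Nonempty (G ≃g (k4MinusEdge ⊕g (⊤ : SimpleGraph (Fin 2)))) := by
  have hone : indepCount (SimpleGraph.cycleGraph 6) 1 = 6 := by
    rw [indepCount_one]; simp
  have hcard : Fintype.card V = 6 := by
    have h1 := h 1
    rw [indepCount_one] at h1
    rw [h1, hone]
  let e : V ≃ Fin 6 := Fintype.equivFinOfCardEq hcard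
  let G2 : SimpleGraph (Fin 6) := G.comap ⇑e.symm
  have iso1 : G ≃g G2 := ⟨e, fun {a b} => by
    show G.Adj (e.symm (e a)) (e.symm (e b)) ↔ G.Adj a b
    rw [Equiv.symm_apply_apply, Equiv.symm_apply_apply]⟩
  have hdec : decodeGraph (encodeG G2) = G2 := decode_encode G2
  set n := encodeG G2 with hn'
  have hIk : ∀ k, indepCount (decodeGraph n) k = indepCount (SimpleGraph.cycleGraph 6) k := by
    intro k
    rw [hdec, ← indepCount_congr iso1 k, h k]
  have e2 : countB2 n = 9 :=
    calc countB2 n = indepCount (decodeGraph n) 2 := (bridge n 2 (by norm_num) L2 L2nodup him2).symm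
      _ = indepCount (SimpleGraph.cycleGraph 6) 2 := hIk 2
      _ = indepCount (decodeGraph 21041) 2 := by rw [cycle_eq]
      _ = countB2 21041 := bridge 21041 2 (by norm_num) L2 L2nodup him2
      _ = 9 := hc2
  have e3 : countB3 n = 2 :=
    calc countB3 n = indepCount (decodeGraph n) 3 := (bridge n 3 (by norm_num) L3 L3nodup him3).symm
      _ = indepCount (SimpleGraph.cycleGraph 6) 3 := hIk 3
      _ = indepCount (decodeGraph 21041) 3 := by rw [cycle_eq]
      _ = countB3 21041 := bridge 21041 3 (by norm_num) L3 L3nodup him3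
      _ = 2 := hc3
  have e4 : countB4 n = 0 :=
    calc countB4 n = indepCount (decodeGraph n) 4 := (bridge n 4 (by norm_num) L4 L4nodup him4).symm
      _ = indepCount (SimpleGraph.cycleGraph 6) 4 := hIk 4
      _ = indepCount (decodeGraph 21041) 4 := by rw [cycle_eq]
      _ = countB4 21041 := bridge 21041 4 (by norm_num) L4 L4nodup him4
      _ = 0 := hc4
  have hchk := mainSweep n (encodeG_lt G2)
  unfold check at hchk
  rw [e3, e2, e4] at hchk
  norm_num at hchk
  unfold good at hchk
  simp only [Bool.or_eq_true, List.any_eq_true] at hchk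
  rcases hchk with (⟨x, hx, hb⟩ | ⟨x, hx, hb⟩) | ⟨x, hx, hb⟩
  · have hneq : n = x.1 := eq_of_beq hb
    have hrel := allC x hx
    rw [← hneq] at hrel
    obtain ⟨i2⟩ := isoOfRelabel hrel
    have h5 : Nonempty (G2 ≃g SimpleGraph.cycleGraph 6) := by
      rw [← hdec, ← cycle_eq]; exact ⟨i2⟩
    exact Or.inl ⟨iso1.trans h5.some⟩
  · have hneq : n = x.1 := eq_of_beq hb
    have hrel := allD x hx
    rw [← hneq] at hrel
    obtain ⟨i2⟩ := isoOfRelabel hrel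
    have h5 : Nonempty (G2 ≃g dGraph 6) := by
      rw [← hdec, ← dGraph_eq]; exact ⟨i2⟩
    exact Or.inr (Or.inl ⟨iso1.trans h5.some⟩)
  · have hneq : n = x.1 := eq_of_beq hb
    have hrel := allK x hx
    rw [← hneq] at hrel
    obtain ⟨i2⟩ := isoOfRelabel hrel
    obtain ⟨i4⟩ := kIso
    have h5 : Nonempty (G2 ≃g (k4MinusEdge ⊕g (⊤ : SimpleGraph (Fin 2)))) := by
      rw [← hdec]; exact ⟨i2.trans i4⟩
    exact Or.inr (Or.inr ⟨iso1.trans h5.some⟩)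
end

section
/- For every odd prime p, the independence polynomial of the cycle C_p, namely the polynomial ∑_{k} i_k(C_p) x^k with rational coefficients, is irreducible over the rationals. -/
open SimpleGraph Polynomial Finset

/-- The independence polynomial of `G`, as a polynomial over `ℚ`. -/
noncomputable def indepPoly {V : Type*} [Fintype V] (G : SimpleGraph V) : Polynomial ℚ :=
  ∑ k ∈ Finset.range (Fintype.card V + 1), Polynomial.C ((indepCount G k : ℚ)) * Polynomial.X ^ k

open Fin.CommRing

variable {p : ℕ}

/-- finset of independent sets of size k in the cycle -/
def indSets (p k : ℕ) : Finset (Finset (Fin p)) :=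
  univ.filter (fun s => s.card = k ∧ ∀ u ∈ s, ∀ v ∈ s, ¬ (SimpleGraph.cycleGraph p).Adj u v)

lemma mem_indSets {k : ℕ} {s : Finset (Fin p)} :
    s ∈ indSets p k ↔ s.card = k ∧ ∀ u ∈ s, ∀ v ∈ s, ¬ (SimpleGraph.cycleGraph p).Adj u v := by
  simp [indSets]

lemma indepCount_cycle (p k : ℕ) : indepCount (SimpleGraph.cycleGraph p) k = (indSets p k).card := by
  rw [indepCount, Nat.card_eq_fintype_card, indSets]
  exact Fintype.card_subtype _

def rot [NeZero p] (r : Fin p) (s : Finset (Fin p)) : Finset (Fin p) := s.image (· + r)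

lemma mem_rot [NeZero p] {r x : Fin p} {s : Finset (Fin p)} : x ∈ rot r s ↔ x - r ∈ s := by
  simp only [rot, Finset.mem_image]
  constructor
  · rintro ⟨y, hy, rfl⟩; simpa using hy
  · intro h; exact ⟨x - r, h, by ring⟩

lemma card_rot [NeZero p] (r : Fin p) (s : Finset (Fin p)) : (rot r s).card = s.card :=
  Finset.card_image_of_injective _ (add_left_injective r)

lemma adj_shift [NeZero p] (r u v : Fin p) :
    (SimpleGraph.cycleGraph p).Adj (u + r) (v + r) ↔ (SimpleGraph.cycleGraph p).Adj u v := by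
  rw [cycleGraph_adj', cycleGraph_adj', add_sub_add_right_eq_sub, add_sub_add_right_eq_sub]

lemma rot_mem_indSets [NeZero p] {k : ℕ} {r : Fin p} {s : Finset (Fin p)}
    (hs : s ∈ indSets p k) : rot r s ∈ indSets p k := by
  rw [mem_indSets] at hs ⊢
  refine ⟨(card_rot r s).trans hs.1, ?_⟩
  intro u hu v hv
  simp only [rot, Finset.mem_image] at hu hv
  obtain ⟨u', hu', rfl⟩ := hu
  obtain ⟨v', hv', rfl⟩ := hv
  rw [adj_shift]
  exact hs.2 u' hu' v' hv'

lemma rot_rot [NeZero p] (r w : Fin p) (s : Finset (Fin p)) : rot r (rot w s) = rot (w + r) s := by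
  ext x; simp [mem_rot, sub_sub, add_comm r w]

lemma rot_zero [NeZero p] (s : Finset (Fin p)) : rot 0 s = s := by
  ext x; simp [mem_rot]

lemma indSets_zero [NeZero p] : indSets p 0 = {∅} := by
  ext s
  simp only [mem_indSets, Finset.card_eq_zero, Finset.mem_singleton]
  constructor
  · rintro ⟨rfl, -⟩; rfl
  · rintro rfl; simp

lemma disjoint_rot_one (hp2 : 2 ≤ p) [NeZero p] {k : ℕ} {s : Finset (Fin p)}
    (hs : s ∈ indSets p k) : Disjoint s (rot 1 s) := by
  rw [Finset.disjoint_left]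
  intro x hx hx1
  rw [mem_rot] at hx1
  refine hs |> mem_indSets.1 |>.2 x hx (x - 1) hx1 ?_
  rw [cycleGraph_adj']
  left
  rw [sub_sub_cancel, Fin.val_one']
  exact Nat.mod_eq_of_lt hp2

lemma card_le_of_indSets (hp2 : 2 ≤ p) [NeZero p] {k : ℕ} {s : Finset (Fin p)}
    (hs : s ∈ indSets p k) : 2 * k ≤ p := by
  have hd := disjoint_rot_one hp2 hs
  have hu := Finset.card_union_of_disjoint hd
  have hle : (s ∪ rot 1 s).card ≤ p := by
    simpa using Finset.card_le_card (Finset.subset_univ (s ∪ rot 1 s))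
  have h1 := card_rot (1 : Fin p) s
  have h2 := (mem_indSets.1 hs).1
  omega

lemma indSets_eq_empty (hp2 : 2 ≤ p) (hodd : Odd p) [NeZero p] {k : ℕ}
    (hk : (p-1)/2 < k) : indSets p k = ∅ := by
  rw [Finset.eq_empty_iff_forall_notMem]
  intro s hs
  have h1 := card_le_of_indSets hp2 hs
  have h2 := (mem_indSets.1 hs).1
  obtain ⟨m, rfl⟩ := hodd
  omega

-- double counting
lemma double_count [NeZero p] (k : ℕ) :
    k * (indSets p k).card = ∑ v : Fin p, ((indSets p k).filter (fun s => v ∈ s)).card := by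
  have : ∀ s ∈ indSets p k, s.card = k := fun s hs => (mem_indSets.1 hs).1
  calc k * (indSets p k).card = ∑ s ∈ indSets p k, s.card := by
        rw [Finset.sum_congr rfl this, Finset.sum_const, smul_eq_mul, mul_comm]
    _ = ∑ s ∈ indSets p k, ∑ v : Fin p, if v ∈ s then 1 else 0 := by
        refine Finset.sum_congr rfl fun s _ => ?_
        rw [← Finset.card_filter]
        congr 1
        simp [Finset.filter_mem_eq_inter]
    _ = ∑ v : Fin p, ∑ s ∈ indSets p k, if v ∈ s then 1 else 0 := Finset.sum_comm
    _ = _ := by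
        refine Finset.sum_congr rfl fun v _ => ?_
        rw [Finset.card_filter]

lemma fiber_card_eq [NeZero p] (k : ℕ) (v : Fin p) :
    ((indSets p k).filter (fun s => v ∈ s)).card = ((indSets p k).filter (fun s => (0:Fin p) ∈ s)).card := by
  apply Finset.card_bij' (fun s _ => rot (0 - v) s) (fun s _ => rot (v - 0) s)
  · intro s hs; rw [rot_rot]; simpa using rot_zero s
  · intro s hs; rw [rot_rot]; simpa using rot_zero s
  · intro s hs
    rw [Finset.mem_filter] at hs ⊢
    exact ⟨rot_mem_indSets hs.1, by rw [mem_rot]; simpa using hs.2⟩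
  · intro s hs
    rw [Finset.mem_filter] at hs ⊢
    refine ⟨rot_mem_indSets hs.1, by rw [mem_rot]; simpa using hs.2⟩

lemma p_dvd_card (hp : p.Prime) {k : ℕ} (hk1 : 1 ≤ k) (hkp : k < p) :
    p ∣ (indSets p k).card := by
  have : NeZero p := ⟨hp.ne_zero⟩
  have h := double_count (p := p) k
  rw [Finset.sum_congr rfl (fun v _ => fiber_card_eq k v), Finset.sum_const] at h
  simp only [Finset.card_univ, Fintype.card_fin, smul_eq_mul] at h
  have hdvd : p ∣ k * (indSets p k).card := ⟨_, h⟩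
  rcases (Nat.Prime.dvd_mul hp).1 hdvd with h' | h'
  · exact absurd (Nat.le_of_dvd (by omega) h') (by omega)
  · exact h'

lemma subval_eq {a b : ℕ} (hp0 : 0 < p) (ha : a < p) (hb : b < p) :
    (p - b + a) % p = if b ≤ a then a - b else p - b + a := by
  split_ifs with h
  · have : p - b + a = (a - b) + p := by omega
    rw [this, Nat.add_mod_right, Nat.mod_eq_of_lt (by omega)]
  · exact Nat.mod_eq_of_lt (by omega)

lemma sub_val' [NeZero p] (u v : Fin p) : (u - v).val = (p - v.val + u.val) % p := by
  rw [Fin.sub_def]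

def baseSet (p d : ℕ) [NeZero p] : Finset (Fin p) := (Finset.range d).image (fun j => ((2*j : ℕ) : Fin p))

section base
variable {d : ℕ} (hpd : p = 2*d+1)
include hpd

lemma mem_baseSet [NeZero p] {x : Fin p} : x ∈ baseSet p d ↔ ∃ j < d, x.val = 2*j := by
  simp only [baseSet, Finset.mem_image, Finset.mem_range]
  constructor
  · rintro ⟨j, hj, rfl⟩
    exact ⟨j, hj, Fin.val_cast_of_lt (by omega)⟩
  · rintro ⟨j, hj, hx⟩
    exact ⟨j, hj, Fin.ext ((Fin.val_cast_of_lt (by omega)).trans hx.symm)⟩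

lemma card_baseSet [NeZero p] : (baseSet p d).card = d := by
  rw [baseSet, Finset.card_image_of_injOn, Finset.card_range]
  intro a ha b hb hab
  simp only [Finset.mem_coe, Finset.mem_range] at ha hb
  have := congrArg Fin.val hab
  rw [Fin.val_cast_of_lt (by omega), Fin.val_cast_of_lt (by omega)] at this
  omega

lemma baseSet_indep [NeZero p] : baseSet p d ∈ indSets p d := by
  rw [mem_indSets]
  refine ⟨card_baseSet hpd, ?_⟩
  intro u hu v hv hadj
  rw [mem_baseSet hpd] at hu hv
  obtain ⟨j, hj, hju⟩ := hu
  obtain ⟨i, hi, hiv⟩ := hv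
  rw [cycleGraph_adj', sub_val', sub_val', hju, hiv,
    subval_eq (by omega) (by omega) (by omega), subval_eq (by omega) (by omega) (by omega)] at hadj
  rcases hadj with h | h <;> split_ifs at h <;> omega

end base

section base2
variable {d : ℕ} (hpd : p = 2*d+1) (hd1 : 1 ≤ d)
include hpd hd1

lemma exists_rot_eq [NeZero p] {s : Finset (Fin p)} (hs : s ∈ indSets p d) :
    ∃ r : Fin p, s = rot r (baseSet p d) := by
  have hp2 : 2 ≤ p := by omega
  have hdisj := disjoint_rot_one hp2 hs
  have hcard : (s ∪ rot 1 s).card = 2*d := by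
    rw [Finset.card_union_of_disjoint hdisj, card_rot, (mem_indSets.1 hs).1]; ring
  have hcompl : (s ∪ rot 1 s)ᶜ.card = 1 := by
    rw [Finset.card_compl, hcard]
    simp only [Fintype.card_fin]
    omega
  obtain ⟨m, hm⟩ := Finset.card_eq_one.1 hcompl
  have hmem : ∀ x : Fin p, x ≠ m → x ∈ s ∨ x - 1 ∈ s := by
    intro x hx
    have : x ∉ (s ∪ rot 1 s)ᶜ := by rw [hm]; simpa using hx
    rw [Finset.mem_compl, not_not, Finset.mem_union, mem_rot] at this
    exact this
  have hms : m ∉ s ∧ m - 1 ∉ s := by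
    have : m ∈ (s ∪ rot 1 s)ᶜ := by rw [hm]; simp
    rw [Finset.mem_compl, Finset.mem_union, mem_rot] at this
    push_neg at this
    exact this
  have hindep := (mem_indSets.1 hs).2
  -- cast helper
  have hcast : ∀ a : ℕ, a < p → ((a+1 : ℕ) : Fin p) - 1 = ((a : ℕ) : Fin p) := by
    intro a ha
    push_cast
    ring
  have hne : ∀ a : ℕ, 0 < a → a < p → m + ((a : ℕ) : Fin p) ≠ m := by
    intro a ha0 hap h
    have : ((a : ℕ) : Fin p) = 0 := by
      have := congrArg (fun z => z - m) h
      simpa [add_comm, add_sub_cancel_right] using this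
    have := congrArg Fin.val this
    rw [Fin.val_cast_of_lt hap] at this
    simp at this
    omega
  have key : ∀ j, j < d → m + ((2*j+1 : ℕ) : Fin p) ∈ s := by
    intro j
    induction j with
    | zero =>
      intro _
      have hx := hmem (m + ((1:ℕ) : Fin p)) (hne 1 (by omega) (by omega))
      rcases hx with h | h
      · simpa using h
      · exfalso
        rw [show m + ((1:ℕ) : Fin p) - 1 = m by push_cast; ring] at h
        exact hms.1 h
    | succ j ih =>
      intro hj
      have hy : m + ((2*j+1 : ℕ) : Fin p) ∈ s := ih (by omega)
      have hz : m + ((2*j+2 : ℕ) : Fin p) ∉ s := by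
        intro hzmem
        refine hindep _ hy _ hzmem ?_
        rw [cycleGraph_adj']
        right
        have : m + ((2*j+2 : ℕ) : Fin p) - (m + ((2*j+1 : ℕ) : Fin p)) = 1 := by
          push_cast
          ring
        rw [this, Fin.val_one']
        exact Nat.mod_eq_of_lt hp2
      have hx := hmem (m + ((2*(j+1)+1 : ℕ) : Fin p)) (hne _ (by omega) (by omega))
      rcases hx with h | h
      · exact h
      · exfalso
        apply hz
        rw [show m + ((2*(j+1)+1 : ℕ) : Fin p) - 1 = m + ((2*j+2 : ℕ) : Fin p) by push_cast; ring] at h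
        exact h
  refine ⟨m + 1, ?_⟩
  have hsub : rot (m+1) (baseSet p d) ⊆ s := by
    intro x hx
    rw [mem_rot, mem_baseSet hpd] at hx
    obtain ⟨j, hj, hval⟩ := hx
    have : x = m + ((2*j+1 : ℕ) : Fin p) := by
      have hxr : x - (m+1) = ((2*j : ℕ) : Fin p) := by
        apply Fin.ext
        rw [hval, Fin.val_cast_of_lt (by omega)]
      have := congrArg (fun z => z + (m+1)) hxr
      simp only [sub_add_cancel] at this
      rw [this]
      push_cast
      ring
    rw [this]
    exact key j hj
  symm
  apply Finset.eq_of_subset_of_card_le hsub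
  rw [(mem_indSets.1 hs).1, card_rot, card_baseSet hpd]

lemma rot_base_inj [NeZero p] {r r' : Fin p} (h : rot r (baseSet p d) = rot r' (baseSet p d)) :
    r = r' := by
  have hp2 : 2 ≤ p := by omega
  have h2v : ((2 : Fin p)).val = 2 := by
    rw [show (2 : Fin p) = ((2:ℕ) : Fin p) by push_cast; ring]
    exact Fin.val_cast_of_lt (by omega)
  have key : ∀ w x : Fin p, (x ∈ rot w (baseSet p d) ∧ x - 2 ∉ rot w (baseSet p d)) ↔ x = w := by
    intro w x
    rw [mem_rot, mem_rot, mem_baseSet hpd, mem_baseSet hpd,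
      show x - 2 - w = (x - w) - 2 by ring]
    constructor
    · rintro ⟨⟨j, hj, hval⟩, hnot⟩
      rcases Nat.eq_zero_or_pos j with rfl | hjpos
      · have : x - w = 0 := Fin.ext (by simpa using hval)
        have := congrArg (fun z => z + w) this
        simpa [sub_add_cancel] using this
      · exfalso
        apply hnot
        refine ⟨j - 1, by omega, ?_⟩
        rw [sub_val', h2v, hval, subval_eq (by omega) (by omega) (by omega)]
        split_ifs with hle
        · omega
        · omega
    · rintro rfl
      constructor
      · exact ⟨0, by omega, by rw [sub_self]; simp⟩
      · rintro ⟨j, hj, hval⟩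
        rw [sub_self, sub_val', h2v] at hval
        simp only [Fin.val_zero, Nat.add_zero] at hval
        rw [Nat.mod_eq_of_lt (by omega)] at hval
        omega
  have h1 : r ∈ rot r (baseSet p d) ∧ r - 2 ∉ rot r (baseSet p d) := (key r r).2 rfl
  rw [h] at h1
  exact ((key r' r).1 h1)

lemma count_top [NeZero p] : (indSets p d).card = p := by
  have : indSets p d = Finset.image (fun r : Fin p => rot r (baseSet p d)) Finset.univ := by
    ext s
    simp only [Finset.mem_image, Finset.mem_univ, true_and]
    constructor
    · intro hs
      obtain ⟨r, hr⟩ := exists_rot_eq hpd hd1 hs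
      exact ⟨r, hr.symm⟩
    · rintro ⟨r, rfl⟩
      exact rot_mem_indSets (baseSet_indep hpd)
  rw [this, Finset.card_image_of_injective _ (fun a b hab => rot_base_inj hpd hd1 hab), Finset.card_univ,
    Fintype.card_fin]

end base2

lemma coeff_sum_CX {R : Type*} [Semiring R] (n : ℕ) (a : ℕ → R) (m : ℕ) :
    (∑ k ∈ Finset.range n, C (a k) * X ^ k).coeff m = if m < n then a m else 0 := by
  rw [Polynomial.finset_sum_coeff]
  simp only [Polynomial.coeff_C_mul, Polynomial.coeff_X_pow, mul_ite, mul_one, mul_zero]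
  rw [Finset.sum_ite_eq (Finset.range n) m a]
  simp [Finset.mem_range]

section final
variable {d : ℕ} (hpd : p = 2*d+1) (hd1 : 1 ≤ d) (hp : p.Prime)
include hpd hd1

lemma coeff_indepPoly [NeZero p] (m : ℕ) :
    (indepPoly (SimpleGraph.cycleGraph p)).coeff m =
      if m ≤ d then ((indSets p m).card : ℚ) else 0 := by
  rw [indepPoly, Fintype.card_fin, coeff_sum_CX]
  rcases le_or_gt m d with h | h
  · rw [if_pos (show m < p + 1 by omega), if_pos h, indepCount_cycle]
  · rw [if_neg (show ¬ m ≤ d by omega)]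
    split_ifs with h2
    · rw [indepCount_cycle, indSets_eq_empty (by omega) (by rw [hpd]; exact ⟨d, by ring⟩) (by omega)]
      simp
    · rfl

include hp

lemma natDegree_indepPoly [NeZero p] :
    (indepPoly (SimpleGraph.cycleGraph p)).natDegree = d := by
  apply le_antisymm
  · apply Polynomial.natDegree_le_iff_coeff_eq_zero.2
    intro m hm
    rw [coeff_indepPoly hpd hd1, if_neg (by omega)]
  · apply Polynomial.le_natDegree_of_ne_zero
    rw [coeff_indepPoly hpd hd1, if_pos le_rfl, count_top hpd hd1]
    exact_mod_cast hp.ne_zero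

end final

section final2
variable {d : ℕ} (hpd : p = 2*d+1) (hd1 : 1 ≤ d) (hp : p.Prime)
include hpd hd1 hp

noncomputable def gZ (p d : ℕ) : Polynomial ℤ :=
  ∑ k ∈ Finset.range (d+1), C (((indSets p (d-k)).card : ℤ)) * X ^ k

omit hpd hd1 hp in
lemma coeff_gZ (j : ℕ) : (gZ p d).coeff j = if j ≤ d then (((indSets p (d-j)).card : ℤ)) else 0 := by
  rw [gZ, coeff_sum_CX]
  split_ifs with h1 h2 h2 <;> first | rfl | omega

lemma natDegree_gZ [NeZero p] : (gZ p d).natDegree = d := by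
  apply le_antisymm
  · apply Polynomial.natDegree_le_iff_coeff_eq_zero.2
    intro m hm
    rw [coeff_gZ, if_neg (by omega)]
  · apply Polynomial.le_natDegree_of_ne_zero
    rw [coeff_gZ, if_pos le_rfl, Nat.sub_self, indSets_zero]
    simp

lemma monic_gZ [NeZero p] : (gZ p d).Monic := by
  rw [Polynomial.Monic, Polynomial.leadingCoeff, natDegree_gZ hpd hd1 hp, coeff_gZ,
    if_pos le_rfl, Nat.sub_self, indSets_zero]
  simp

lemma irreducible_gZ [NeZero p] : Irreducible (gZ p d) := by
  have hprime : (Ideal.span {(p : ℤ)}).IsPrime := by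
    rw [Ideal.span_singleton_prime (by exact_mod_cast hp.ne_zero)]
    exact Nat.prime_iff_prime_int.1 hp
  refine Polynomial.IsEisensteinAt.irreducible ?_ hprime ((monic_gZ hpd hd1 hp).isPrimitive) ?_
  · constructor
    · rw [(monic_gZ hpd hd1 hp).leadingCoeff]
      intro hmem
      have := Ideal.mem_span_singleton.1 hmem
      have := Int.le_of_dvd one_pos this
      have hp2 := hp.two_le
      omega
    · intro n hn
      rw [natDegree_gZ hpd hd1 hp] at hn
      rw [coeff_gZ, if_pos (by omega)]
      rw [Ideal.mem_span_singleton]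
      have hdvd : p ∣ (indSets p (d - n)).card := p_dvd_card hp (by omega) (by omega)
      exact_mod_cast Int.natCast_dvd_natCast.2 hdvd
    · rw [coeff_gZ, if_pos (by omega), Nat.sub_zero, count_top hpd hd1,
        Ideal.span_singleton_pow, Ideal.mem_span_singleton]
      intro hdvd
      have := Int.le_of_dvd (by exact_mod_cast hp.pos) hdvd
      have hp2 := hp.two_le
      nlinarith [this]
  · rw [natDegree_gZ hpd hd1 hp]; omega

lemma reverse_eq [NeZero p] :
    (indepPoly (SimpleGraph.cycleGraph p)).reverse = (gZ p d).map (algebraMap ℤ ℚ) := by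
  ext n
  rw [Polynomial.coeff_reverse, Polynomial.coeff_map, natDegree_indepPoly hpd hd1 hp, coeff_gZ]
  rcases le_or_gt n d with h | h
  · rw [Polynomial.revAt_le h, if_pos h, coeff_indepPoly hpd hd1, if_pos (by omega)]
    simp
  · rw [Polynomial.revAt_eq_self_of_lt h, if_neg (by omega), coeff_indepPoly hpd hd1,
      if_neg (by omega)]
    simp

lemma irreducible_reverse [NeZero p] :
    Irreducible (indepPoly (SimpleGraph.cycleGraph p)).reverse := by
  rw [reverse_eq hpd hd1 hp]
  exact ((monic_gZ hpd hd1 hp).isPrimitive.irreducible_iff_irreducible_map_fraction_map).1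
    (irreducible_gZ hpd hd1 hp)

lemma indepPoly_coeff_zero [NeZero p] : (indepPoly (SimpleGraph.cycleGraph p)).coeff 0 = 1 := by
  rw [coeff_indepPoly hpd hd1, if_pos (by omega), indSets_zero]
  simp

omit hpd hd1 hp in
lemma unit_of_reverse_unit {c : Polynomial ℚ} (hc : c.coeff 0 ≠ 0) (h : IsUnit c.reverse) :
    IsUnit c := by
  have hc0 : c ≠ 0 := fun h0 => hc (by simp [h0])
  have ht : c.natTrailingDegree = 0 := Polynomial.natTrailingDegree_eq_zero.2 (Or.inr hc)
  have hr : c.reverse.natDegree = 0 := Polynomial.natDegree_eq_zero_of_isUnit h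
  have hd : c.natDegree = 0 := by
    rw [Polynomial.natDegree_eq_reverse_natDegree_add_natTrailingDegree, hr, ht]
  rw [Polynomial.eq_C_of_natDegree_eq_zero hd]
  exact Polynomial.isUnit_C.2 (isUnit_iff_ne_zero.2 hc)

lemma irreducible_final [NeZero p] : Irreducible (indepPoly (SimpleGraph.cycleGraph p)) := by
  have hrev := irreducible_reverse hpd hd1 hp
  have hc0 := indepPoly_coeff_zero hpd hd1 hp
  constructor
  · intro h
    have := Polynomial.natDegree_eq_zero_of_isUnit h
    rw [natDegree_indepPoly hpd hd1 hp] at this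
    omega
  · intro a b hab
    have hab' : (indepPoly (SimpleGraph.cycleGraph p)).reverse = a.reverse * b.reverse := by
      rw [hab]; exact Polynomial.reverse_mul_of_domain a b
    have hcoeff : a.coeff 0 * b.coeff 0 = 1 := by
      rw [← Polynomial.mul_coeff_zero, ← hab, hc0]
    rcases hrev.isUnit_or_isUnit hab' with h | h
    · exact Or.inl (unit_of_reverse_unit (left_ne_zero_of_mul_eq_one hcoeff) h)
    · exact Or.inr (unit_of_reverse_unit (right_ne_zero_of_mul_eq_one hcoeff) h)

end final2

theorem indepPoly_primeCycle_irreducible (p : ℕ) (hp : p.Prime) (hodd : Odd p) :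
    Irreducible (indepPoly (SimpleGraph.cycleGraph p)) := by
  obtain ⟨m, hm⟩ := hodd
  have hp2 := hp.two_le
  have hne2 : p ≠ 2 := by rintro rfl; omega
  have hm1 : 1 ≤ m := by omega
  have : NeZero p := ⟨by omega⟩
  exact irreducible_final hm hm1 hp
end

section
/- Let f, g, h be polynomials with integer coefficients such that h = g·f. If h and g are both unicyclic, then f is unicyclic. -/
open Polynomial

/-- A polynomial with integer coefficients is *unicyclic* if its constant coefficient is `1`
and there is an integer `k` such that its linear coefficient is `k` and its quadratic
coefficient is `C(k,2) - k`. -/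
def Unicyclic (p : Polynomial ℤ) : Prop :=
  p.coeff 0 = 1 ∧ ∃ k : ℤ, p.coeff 1 = k ∧ 2 * p.coeff 2 = k * (k - 1) - 2 * k

/-!
Put `δ p = 2 p₂ - p₁ (p₁ - 3)`; a polynomial with `p₀ = 1` is unicyclic iff `δ p = 0`, since
`k` is forced to be `p₁`. As `δ p = 2 [x²] log p + 3 [x] log p`, it is additive on polynomials
with constant term `1`, so `δ f = δ h - δ g = 0`.
-/

namespace Polynomial

variable {R : Type*}

theorem coeff_mul_one_eq [Semiring R] (p q : R[X]) :
    (p * q).coeff 1 = p.coeff 0 * q.coeff 1 + p.coeff 1 * q.coeff 0 := by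
  simp [coeff_mul, Finset.Nat.sum_antidiagonal_succ, add_comm]

theorem coeff_mul_two_eq [Semiring R] (p q : R[X]) :
    (p * q).coeff 2 =
      p.coeff 0 * q.coeff 2 + p.coeff 1 * q.coeff 1 + p.coeff 2 * q.coeff 0 := by
  simp [coeff_mul, Finset.Nat.sum_antidiagonal_succ]
  abel

def unicyclicDefect [Ring R] (p : R[X]) : R :=
  2 * p.coeff 2 - p.coeff 1 * (p.coeff 1 - 3)

theorem unicyclicDefect_mul [CommRing R] {p q : R[X]} (hp : p.coeff 0 = 1)
    (hq : q.coeff 0 = 1) :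
    unicyclicDefect (p * q) = unicyclicDefect p + unicyclicDefect q := by
  simp only [unicyclicDefect, coeff_mul_one_eq, coeff_mul_two_eq, hp, hq]
  ring

end Polynomial

theorem unicyclic_iff_unicyclicDefect_eq_zero (p : ℤ[X]) :
    Unicyclic p ↔ p.coeff 0 = 1 ∧ unicyclicDefect p = 0 := by
  unfold Unicyclic unicyclicDefect
  constructor
  · rintro ⟨h0, k, rfl, h2⟩
    exact ⟨h0, by linarith⟩
  · rintro ⟨h0, h2⟩
    exact ⟨h0, p.coeff 1, rfl, by linarith⟩

theorem unicyclic_of_factor (f g h : Polynomial ℤ) (hfg : h = g * f)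
    (hh : Unicyclic h) (hg : Unicyclic g) : Unicyclic f := by
  obtain ⟨h0, hδ⟩ := (unicyclic_iff_unicyclicDefect_eq_zero h).mp hh
  obtain ⟨g0, gδ⟩ := (unicyclic_iff_unicyclicDefect_eq_zero g).mp hg
  have f0 : f.coeff 0 = 1 := by
    rwa [hfg, mul_coeff_zero, g0, one_mul] at h0
  refine (unicyclic_iff_unicyclicDefect_eq_zero f).mpr ⟨f0, ?_⟩
  rwa [hfg, unicyclicDefect_mul g0 f0, gδ, zero_add] at hδ
end

section
/- Let n ≥ 3 be odd and let k ≥ 3. Then k divides n if and only if the independence polynomial of C_k divides the independence polynomial of C_n in ℚ[x]. -/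
open SimpleGraph Polynomial Finset

noncomputable def Lp : ℕ → Polynomial ℚ
  | 0 => Polynomial.C 2
  | 1 => Polynomial.C 1
  | (n+2) => Lp (n+1) + X * Lp n

lemma Lp_zero : Lp 0 = Polynomial.C 2 := rfl
lemma Lp_one : Lp 1 = Polynomial.C 1 := rfl
lemma Lp_add_two (n : ℕ) : Lp (n+2) = Lp (n+1) + X * Lp n := rfl

lemma Lp_eval0 : ∀ n, (Lp (n+1)).eval 0 = 1 := by
  intro n
  induction n using Nat.twoStepInduction with
  | zero => simp [Lp_one]
  | one => simp [Lp_add_two, Lp_one]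
  | more n ih1 ih2 => simp [Lp_add_two, ih1]

lemma Lp_ne_zero (n : ℕ) : Lp (n+1) ≠ 0 := by
  intro h
  have := Lp_eval0 n
  rw [h] at this; simp at this

lemma Lp_natDegree_le : ∀ n, (Lp n).natDegree ≤ n / 2 := by
  intro n
  induction n using Nat.twoStepInduction with
  | zero => simp [Lp_zero]
  | one => simp [Lp_one]
  | more n ih1 ih2 =>
    have h1 : (Lp (n+2)).natDegree ≤ max (Lp (n+1)).natDegree (X * Lp n).natDegree := by
      rw [Lp_add_two]; exact natDegree_add_le _ _
    have h2 : (X * Lp n).natDegree ≤ X.natDegree + (Lp n).natDegree := natDegree_mul_le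
    rw [natDegree_X] at h2
    have h3 : (n+1)/2 ≤ (n+2)/2 := by omega
    have h4 : 1 + n/2 ≤ (n+2)/2 := by omega
    omega

lemma Lp_coeff_top : ∀ m, (Lp (2*m)).coeff m = 2 ∧ (Lp (2*m+1)).coeff m = 2*m+1 := by
  intro m
  induction m with
  | zero => constructor <;> simp [Lp_zero, Lp_one]
  | succ m ih =>
    have hd1 : (Lp (2*m+1)).coeff (m+1) = 0 := by
      apply coeff_eq_zero_of_natDegree_lt
      have := Lp_natDegree_le (2*m+1)
      have h2 : (2*m+1)/2 = m := by omega
      omega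
    have h2 : (Lp (2*(m+1))).coeff (m+1) = 2 := by
      have e : 2*(m+1) = (2*m)+2 := by ring
      rw [e, Lp_add_two, coeff_add, coeff_X_mul, hd1, ih.1]
      ring
    refine ⟨h2, ?_⟩
    have : 2*(m+1)+1 = (2*m+1)+2 := by ring
    rw [this, Lp_add_two, coeff_add, coeff_X_mul]
    rw [show (2*m+1)+1 = 2*(m+1) from by ring, h2, ih.2]
    push_cast; ring

lemma Lp_natDegree (n : ℕ) : (Lp n).natDegree = n / 2 := by
  refine le_antisymm (Lp_natDegree_le n) ?_
  apply le_natDegree_of_ne_zero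
  rcases Nat.even_or_odd n with ⟨m, hm⟩ | ⟨m, hm⟩
  · have e : n = 2*m := by omega
    subst e
    have e2 : 2*m/2 = m := by omega
    rw [e2, (Lp_coeff_top m).1]
    norm_num
  · have e : n = 2*m+1 := by omega
    subst e
    have e2 : (2*m+1)/2 = m := by omega
    rw [e2, (Lp_coeff_top m).2]
    positivity

lemma Lp_key : ∀ n, ∀ d, Lp (n + d) * Lp n = Lp (2*n + d) + (-X)^n * Lp d := by
  intro n
  induction n using Nat.twoStepInduction with
  | zero => intro d; simp only [Lp_zero, Nat.add_zero, Nat.zero_add, Nat.mul_zero, pow_zero, one_mul, map_ofNat]; ring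
  | one => intro d
           simp only [Lp_one, pow_one, map_one, mul_one]
           rw [show 2*1+d = d+2 from by ring, Lp_add_two, show 1+d = d+1 from by ring]
           ring
  | more n ih1 ih2 =>
    intro d
    have e1 : n+2+d = (n+1)+(d+1) := by ring
    have e2 : Lp (n+2) = Lp (n+1) + X * Lp n := Lp_add_two n
    calc Lp (n+2+d) * Lp (n+2) = Lp ((n+1)+(d+1)) * Lp (n+1) + X * (Lp (n+(d+2)) * Lp n) := by
            rw [e1, e2]
            rw [show (n+1)+(d+1) = n+(d+2) from by ring]
            ring
      _ = (Lp (2*(n+1)+(d+1)) + (-X)^(n+1) * Lp (d+1)) + X * (Lp (2*n+(d+2)) + (-X)^n * Lp (d+2)) := by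
            rw [ih2, ih1]
      _ = (Lp (2*(n+1)+(d+1)) + X * Lp (2*n+(d+2))) + ((-X)^(n+1) * Lp (d+1) + X * ((-X)^n * Lp (d+2))) := by ring
      _ = Lp (2*(n+2)+d) + (-X)^(n+2) * Lp d := by
            congr 1
            · rw [show 2*(n+2)+d = (2*n+d+2)+2 from by ring, Lp_add_two,
                show 2*(n+1)+(d+1) = 2*n+d+2+1 from by ring, show 2*n+(d+2) = 2*n+d+2 from by ring]
            · rw [show d+2 = d+2 from rfl, Lp_add_two d]
              rw [show (-X : Polynomial ℚ)^(n+1) = (-X)^n * (-X) from pow_succ _ _,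
                show (-X : Polynomial ℚ)^(n+2) = (-X)^n * (-X) * (-X) from by ring]
              ring

lemma Lp_coprime_X (k : ℕ) : IsCoprime (Lp (k+1)) ((-X : Polynomial ℚ)) := by
  have h : ¬ (X : Polynomial ℚ) ∣ Lp (k+1) := by
    rw [X_dvd_iff]
    intro h2
    have h3 := Lp_eval0 k
    rw [← coeff_zero_eq_eval_zero, h2] at h3
    simp at h3
  have := (Polynomial.prime_X.coprime_iff_not_dvd.mpr h).symm
  exact this.neg_right

lemma Lp_coprime_Xpow (k s : ℕ) : IsCoprime (Lp (k+1)) ((-X : Polynomial ℚ)^s) :=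
  (Lp_coprime_X k).pow_right

lemma Lp_dvd_small {k t : ℕ} (hk : 1 ≤ k) (ht : Odd t) (hlt : t < k) : ¬ Lp k ∣ Lp t := by
  intro h
  obtain ⟨a, ha⟩ := ht
  have htpos : 1 ≤ t := by omega
  have hne : Lp t ≠ 0 := by
    obtain ⟨t', rfl⟩ : ∃ t', t = t'+1 := ⟨t-1, by omega⟩
    exact Lp_ne_zero t'
  have hdeg := Polynomial.natDegree_le_of_dvd h hne
  rw [Lp_natDegree, Lp_natDegree] at hdeg
  omega

lemma Lp_dvd_shift {k d : ℕ} (hk : 1 ≤ k) : (Lp k ∣ Lp (2*k + d)) ↔ (Lp k ∣ Lp d) := by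
  have key := Lp_key k d
  obtain ⟨k', rfl⟩ : ∃ k', k = k'+1 := ⟨k-1, by omega⟩
  constructor
  · intro h
    have h2 : Lp (k'+1) ∣ (-X : Polynomial ℚ)^(k'+1) * Lp d := by
      have : (-X : Polynomial ℚ)^(k'+1) * Lp d = Lp ((k'+1) + d) * Lp (k'+1) - Lp (2*(k'+1) + d) := by
        rw [key]; ring
      rw [this]
      exact dvd_sub (dvd_mul_left _ _) h
    exact (Lp_coprime_Xpow k' (k'+1)).dvd_of_dvd_mul_left h2
  · intro h
    have : Lp (2*(k'+1) + d) = Lp ((k'+1) + d) * Lp (k'+1) - (-X)^(k'+1) * Lp d := by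
      rw [key]; ring
    rw [this]
    exact dvd_sub (dvd_mul_left _ _) (Dvd.dvd.mul_left h _)

lemma Lp_dvd_mod {k d : ℕ} (hk : 1 ≤ k) : ∀ q, (Lp k ∣ Lp (2*k*q + d)) ↔ (Lp k ∣ Lp d) := by
  intro q
  induction q with
  | zero => simp
  | succ q ih =>
    have : 2*k*(q+1) + d = 2*k + (2*k*q + d) := by ring
    rw [this, Lp_dvd_shift hk, ih]

lemma Lp_dvd_iff {n k : ℕ} (hk : 1 ≤ k) (hn : Odd n) : (Lp k ∣ Lp n) ↔ k ∣ n := by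
  have hn1 : 1 ≤ n := hn.pos
  set q := n / (2*k) with hq
  set r := n % (2*k) with hr
  have hdecomp : n = 2*k*q + r := (Nat.div_add_mod n (2*k)).symm
  have hrlt : r < 2*k := Nat.mod_lt _ (by omega)
  have hrodd : Odd r := by
    have h2 : r % 2 = n % 2 := Nat.mod_mod_of_dvd n ⟨k, by ring⟩
    rcases hn with ⟨a, ha⟩
    rcases Nat.even_or_odd r with he | ho
    · exfalso; rcases he with ⟨b, hb⟩; omega
    · exact ho
  have hred : (Lp k ∣ Lp n) ↔ (Lp k ∣ Lp r) := by
    rw [show n = 2*k*q + r from hdecomp]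
    exact Lp_dvd_mod hk q
  rw [hred]
  constructor
  · intro h
    rcases lt_trichotomy r k with hc | hc | hc
    · exact absurd h (Lp_dvd_small hk hrodd hc)
    · refine ⟨2*q+1, ?_⟩
      rw [show n = 2*k*q + r from hdecomp, hc]; ring
    · exfalso
      set s := r - k with hs
      have hs1 : 1 ≤ s := by omega
      have hsk : s < k := by omega
      have key := Lp_key s (k - s)
      have e1 : s + (k - s) = k := by omega
      have e2 : 2*s + (k - s) = r := by omega
      rw [e1, e2] at key
      have h2 : Lp k ∣ (-X : Polynomial ℚ)^s * Lp (k - s) := by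
        have : (-X : Polynomial ℚ)^s * Lp (k-s) = Lp k * Lp s - Lp r := by
          rw [key]; ring
        rw [this]
        exact dvd_sub (dvd_mul_right _ _) h
      obtain ⟨k', rfl⟩ : ∃ k', k = k'+1 := ⟨k-1, by omega⟩
      have h3 : Lp (k'+1) ∣ Lp (k'+1 - s) := (Lp_coprime_Xpow k' s).dvd_of_dvd_mul_left h2
      have hodd2 : Odd (k'+1 - s) := by
        rcases hrodd with ⟨a, ha⟩
        rcases Nat.even_or_odd (k'+1-s) with he | ho
        · exfalso; rcases he with ⟨b, hb⟩; omega
        · exact ho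
      exact Lp_dvd_small hk hodd2 (by omega) h3
  · rintro ⟨m, hm⟩
    have hmodd : Odd m := by
      rw [hm] at hn
      exact (Nat.odd_mul.mp hn).2
    rcases hmodd with ⟨a, ha⟩
    have hrk : r = k := by
      rw [hr, hm, ha]
      have e : k*(2*a+1) = k + 2*k*a := by ring
      rw [e, Nat.add_mul_mod_self_left]
      exact Nat.mod_eq_of_lt (by omega)
    rw [hrk]

def NCset (s : Finset ℕ) : Prop := ∀ u ∈ s, u + 1 ∉ s

def CycSet (n : ℕ) (s : Finset ℕ) : Prop := ∀ u ∈ s, (u + 1) % n ∉ s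

instance : DecidablePred NCset := fun s => by unfold NCset; infer_instance
instance (n : ℕ) : DecidablePred (CycSet n) := fun s => by unfold CycSet; infer_instance

def pc (m j : ℕ) : ℕ := ((Finset.range m).powerset.filter (fun s => s.card = j ∧ NCset s)).card

def pcI (l r j : ℕ) : ℕ := ((Finset.Ico l r).powerset.filter (fun s => s.card = j ∧ NCset s)).card

def cyc (n j : ℕ) : ℕ := ((Finset.range n).powerset.filter (fun s => s.card = j ∧ CycSet n s)).card

lemma pc_zero_right (m : ℕ) : pc m 0 = 1 := by
  rw [pc]
  have : (Finset.range m).powerset.filter (fun s => s.card = 0 ∧ NCset s) = {∅} := by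
    ext s
    simp only [mem_filter, mem_powerset, Finset.card_eq_zero, mem_singleton]
    constructor
    · rintro ⟨-, rfl, -⟩; rfl
    · rintro rfl
      exact ⟨empty_subset _, rfl, fun u hu => absurd hu (notMem_empty u)⟩
  rw [this, card_singleton]

lemma pc_eq_zero {m j : ℕ} (h : m < j) : pc m j = 0 := by
  rw [pc, Finset.card_eq_zero]
  rw [Finset.filter_eq_empty_iff]
  rintro s hs ⟨hcard, -⟩
  rw [mem_powerset] at hs
  have := Finset.card_le_card hs
  rw [hcard, card_range] at this
  omega

lemma pc_one_one : pc 1 1 = 1 := by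
  rw [pc]
  have : (Finset.range 1).powerset.filter (fun s => s.card = 1 ∧ NCset s) = {{0}} := by
    ext s
    simp only [mem_filter, mem_powerset, mem_singleton]
    constructor
    · rintro ⟨hsub, hcard, -⟩
      obtain ⟨a, ha⟩ := Finset.card_eq_one.mp hcard
      subst ha
      have := hsub (mem_singleton_self a)
      simp only [Finset.range_one, mem_singleton] at this
      subst this; rfl
    · rintro rfl
      refine ⟨by simp, rfl, ?_⟩
      intro u hu
      simp only [mem_singleton] at hu ⊢
      omega
  rw [this, card_singleton]

lemma pc_rec (m j : ℕ) : pc (m+2) (j+1) = pc (m+1) (j+1) + pc m j := by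
  rw [pc]
  set F := (Finset.range (m+2)).powerset.filter (fun s => s.card = j+1 ∧ NCset s) with hF
  rw [← Finset.card_filter_add_card_filter_not (s := F) (p := fun s => m+1 ∈ s)]
  rw [add_comm]
  congr 1
  · -- m+1 ∉ s part equals pc (m+1) (j+1)
    rw [pc]
    congr 1
    ext s
    simp only [hF, mem_filter, mem_powerset]
    constructor
    · rintro ⟨⟨hsub, hcard, hnc⟩, hnot⟩
      refine ⟨?_, hcard, hnc⟩
      intro x hx
      have h1 := hsub hx
      rw [mem_range] at h1 ⊢
      have : x ≠ m+1 := fun h => hnot (h ▸ hx)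
      omega
    · rintro ⟨hsub, hcard, hnc⟩
      have hsub2 : s ⊆ Finset.range (m+2) := hsub.trans (by
        intro x hx; rw [mem_range] at hx ⊢; omega)
      refine ⟨⟨hsub2, hcard, hnc⟩, fun hmem => ?_⟩
      have := hsub hmem
      rw [mem_range] at this
      omega
  · -- m+1 ∈ s part equals pc m j
    rw [pc]
    apply Finset.card_nbij' (fun s => s.erase (m+1)) (fun t => insert (m+1) t)
    · -- maps into
      intro s hs
      simp only [hF, Finset.mem_coe, mem_filter, mem_powerset] at hs
      obtain ⟨⟨hsub, hcard, hnc⟩, hmem⟩ := hs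
      have hmnot : m ∉ s := fun hm => hnc m hm hmem
      simp only [Finset.mem_coe, mem_filter, mem_powerset]
      refine ⟨?_, ?_, ?_⟩
      · intro x hx
        rw [mem_erase] at hx
        have := hsub hx.2
        rw [mem_range] at this ⊢
        have : x ≠ m := fun h => hmnot (h ▸ hx.2)
        omega
      · rw [Finset.card_erase_of_mem hmem, hcard]; omega
      · intro u hu
        rw [mem_erase] at hu
        intro hu2
        rw [mem_erase] at hu2
        exact hnc u hu.2 hu2.2
    · -- inverse maps into
      intro t ht
      simp only [Finset.mem_coe, mem_filter, mem_powerset] at ht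
      obtain ⟨hsub, hcard, hnc⟩ := ht
      have hnotmem : m+1 ∉ t := by
        intro h; have := hsub h; rw [mem_range] at this; omega
      simp only [Finset.mem_coe, hF, mem_filter, mem_powerset]
      refine ⟨⟨?_, ?_, ?_⟩, mem_insert_self _ _⟩
      · intro x hx
        rw [mem_insert] at hx
        rcases hx with rfl | hx
        · rw [mem_range]; omega
        · have := hsub hx; rw [mem_range] at this ⊢; omega
      · rw [Finset.card_insert_of_notMem hnotmem, hcard]
      · intro u hu
        rw [mem_insert] at hu
        intro hu2
        rw [mem_insert] at hu2
        rcases hu with rfl | hu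
        · rcases hu2 with h | h
          · omega
          · have := hsub h; rw [mem_range] at this; omega
        · rcases hu2 with h | h
          · have := hsub hu; rw [mem_range] at this; omega
          · exact hnc u hu h
    · -- left inverse
      intro s hs
      simp only [hF, Finset.mem_coe, mem_filter, mem_powerset] at hs
      exact Finset.insert_erase hs.2
    · -- right inverse
      intro t ht
      simp only [Finset.mem_coe, mem_filter, mem_powerset] at ht
      apply Finset.erase_insert
      intro h
      have := ht.1 h
      rw [mem_range] at this; omega

lemma pcI_eq_pc (l m j : ℕ) : pcI l (l+m) j = pc m j := by
  rw [pcI, pc]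
  apply Finset.card_nbij' (fun s => s.image (· - l)) (fun t => t.image (· + l))
  · intro s hs
    simp only [Finset.mem_coe, mem_filter, mem_powerset] at hs ⊢
    obtain ⟨hsub, hcard, hnc⟩ := hs
    have hmem : ∀ x ∈ s, l ≤ x ∧ x < l + m := by
      intro x hx; have := hsub hx; rw [Finset.mem_Ico] at this; exact this
    refine ⟨?_, ?_, ?_⟩
    · intro y hy
      rw [Finset.mem_image] at hy
      obtain ⟨x, hx, rfl⟩ := hy
      rw [mem_range]
      have := hmem x hx
      omega
    · rw [Finset.card_image_of_injOn, hcard]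
      intro x hx y hy hxy
      have h1 := hmem x hx
      have h2 := hmem y hy
      simp only at hxy
      omega
    · intro u hu hu1
      rw [Finset.mem_image] at hu hu1
      obtain ⟨x, hx, rfl⟩ := hu
      obtain ⟨y, hy, hy2⟩ := hu1
      have h1 := hmem x hx
      have h2 := hmem y hy
      have : y = x + 1 := by omega
      exact hnc x hx (this ▸ hy)
  · intro t ht
    simp only [Finset.mem_coe, mem_filter, mem_powerset] at ht ⊢
    obtain ⟨hsub, hcard, hnc⟩ := ht
    have hmem : ∀ x ∈ t, x < m := by
      intro x hx; have := hsub hx; rw [mem_range] at this; exact this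
    refine ⟨?_, ?_, ?_⟩
    · intro y hy
      rw [Finset.mem_image] at hy
      obtain ⟨x, hx, rfl⟩ := hy
      rw [Finset.mem_Ico]
      have := hmem x hx
      omega
    · rw [Finset.card_image_of_injOn, hcard]
      intro x _ y _ hxy
      simp only at hxy
      omega
    · intro u hu hu1
      rw [Finset.mem_image] at hu hu1
      obtain ⟨x, hx, rfl⟩ := hu
      obtain ⟨y, hy, hy2⟩ := hu1
      have : y = x + 1 := by omega
      exact hnc x hx (this ▸ hy)
  · intro s hs
    simp only [Finset.mem_coe, mem_filter, mem_powerset] at hs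
    beta_reduce
    rw [Finset.image_image]
    have : ∀ x ∈ s, ((· + l) ∘ (· - l)) x = id x := by
      intro x hx
      have := hs.1 hx
      rw [Finset.mem_Ico] at this
      simp only [Function.comp_apply, id_eq]
      omega
    rw [Finset.image_congr this, Finset.image_id]
  · intro t ht
    beta_reduce
    rw [Finset.image_image]
    have : ∀ x ∈ t, ((· - l) ∘ (· + l)) x = id x := by
      intro x hx
      simp only [Function.comp_apply, id_eq]
      omega
    rw [Finset.image_congr this, Finset.image_id]

lemma cyc_zero (n : ℕ) : cyc n 0 = 1 := by
  rw [cyc]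
  have : (Finset.range n).powerset.filter (fun s => s.card = 0 ∧ CycSet n s) = {∅} := by
    ext s
    simp only [mem_filter, mem_powerset, Finset.card_eq_zero, mem_singleton]
    constructor
    · rintro ⟨-, rfl, -⟩; rfl
    · rintro rfl
      exact ⟨empty_subset _, rfl, fun u hu => absurd hu (notMem_empty u)⟩
  rw [this, card_singleton]

lemma cyc_succ (n j : ℕ) (hn : 3 ≤ n) :
    cyc n (j+1) = pcI 1 n (j+1) + pcI 2 (n-1) j := by
  rw [cyc]
  set F := (Finset.range n).powerset.filter (fun s => s.card = j+1 ∧ CycSet n s) with hF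
  rw [← Finset.card_filter_add_card_filter_not (s := F) (p := fun s => 0 ∈ s)]
  rw [add_comm]
  congr 1
  · -- 0 ∉ s part equals pcI 1 n (j+1)
    rw [pcI]
    congr 1
    ext s
    simp only [hF, mem_filter, mem_powerset]
    constructor
    · rintro ⟨⟨hsub, hcard, hcy⟩, hnot⟩
      have hmem : ∀ x ∈ s, 1 ≤ x ∧ x < n := by
        intro x hx
        have := hsub hx; rw [mem_range] at this
        have : x ≠ 0 := fun h => hnot (h ▸ hx)
        omega
      refine ⟨?_, hcard, ?_⟩
      · intro x hx; rw [Finset.mem_Ico]; exact hmem x hx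
      · intro u hu hu1
        have h1 := hmem u hu
        have h2 := hmem (u+1) hu1
        have heq : (u+1) % n = u+1 := Nat.mod_eq_of_lt (by omega)
        exact hcy u hu (by rw [heq]; exact hu1)
    · rintro ⟨hsub, hcard, hnc⟩
      have hmem : ∀ x ∈ s, 1 ≤ x ∧ x < n := by
        intro x hx; have := hsub hx; rw [Finset.mem_Ico] at this; exact this
      have h0 : 0 ∉ s := fun h => by have := hmem 0 h; omega
      refine ⟨⟨?_, hcard, ?_⟩, h0⟩
      · intro x hx; rw [mem_range]; exact (hmem x hx).2
      · intro u hu hu1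
        have h1 := hmem u hu
        rcases Nat.lt_or_ge (u+1) n with h | h
        · rw [Nat.mod_eq_of_lt h] at hu1
          exact hnc u hu hu1
        · have : u + 1 = n := by omega
          rw [this, Nat.mod_self] at hu1
          exact h0 hu1
  · -- 0 ∈ s part equals pcI 2 (n-1) j
    rw [pcI]
    apply Finset.card_nbij' (fun s => s.erase 0) (fun t => insert 0 t)
    · intro s hs
      simp only [hF, Finset.mem_coe, mem_filter, mem_powerset] at hs
      obtain ⟨⟨hsub, hcard, hcy⟩, hmem⟩ := hs
      have h1 : 1 ∉ s := by
        have := hcy 0 hmem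
        rwa [Nat.mod_eq_of_lt (by omega)] at this
      have hn1 : n - 1 ∉ s := by
        intro h
        have := hcy (n-1) h
        rw [show n-1+1 = n from by omega, Nat.mod_self] at this
        exact this hmem
      simp only [Finset.mem_coe, mem_filter, mem_powerset]
      refine ⟨?_, ?_, ?_⟩
      · intro x hx
        rw [mem_erase] at hx
        obtain ⟨hx0, hxs⟩ := hx
        have := hsub hxs; rw [mem_range] at this
        rw [Finset.mem_Ico]
        have hne1 : x ≠ 1 := fun h => h1 (h ▸ hxs)
        have hnen1 : x ≠ n - 1 := fun h => hn1 (h ▸ hxs)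
        omega
      · rw [Finset.card_erase_of_mem hmem, hcard]; omega
      · intro u hu hu1
        rw [mem_erase] at hu hu1
        have h2 := hsub hu.2
        rw [mem_range] at h2
        have hne : u ≠ n - 1 := fun h => hn1 (h ▸ hu.2)
        have heq : (u+1) % n = u + 1 := Nat.mod_eq_of_lt (by omega)
        exact hcy u hu.2 (by rw [heq]; exact hu1.2)
    · intro t ht
      simp only [Finset.mem_coe, mem_filter, mem_powerset] at ht
      obtain ⟨hsub, hcard, hnc⟩ := ht
      have hmem : ∀ x ∈ t, 2 ≤ x ∧ x < n - 1 := by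
        intro x hx; have := hsub hx; rw [Finset.mem_Ico] at this; exact this
      have h0 : 0 ∉ t := fun h => by have := hmem 0 h; omega
      simp only [Finset.mem_coe, hF, mem_filter, mem_powerset]
      refine ⟨⟨?_, ?_, ?_⟩, mem_insert_self _ _⟩
      · intro x hx
        rw [mem_insert] at hx
        rw [mem_range]
        rcases hx with rfl | hx
        · omega
        · have := hmem x hx; omega
      · rw [Finset.card_insert_of_notMem h0, hcard]
      · intro u hu hu1
        rw [mem_insert] at hu hu1
        rcases hu with rfl | hu
        · rw [Nat.mod_eq_of_lt (by omega)] at hu1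
          rcases hu1 with h | h
          · omega
          · have := hmem 1 h; omega
        · have h2 := hmem u hu
          rw [Nat.mod_eq_of_lt (by omega)] at hu1
          rcases hu1 with h | h
          · omega
          · exact hnc u hu h
    · intro s hs
      simp only [hF, Finset.mem_coe, mem_filter, mem_powerset] at hs
      exact Finset.insert_erase hs.2
    · intro t ht
      simp only [Finset.mem_coe, mem_filter, mem_powerset] at ht
      apply Finset.erase_insert
      intro h
      have := ht.1 h
      rw [Finset.mem_Ico] at this; omega

lemma indepCount_cycle_s17 (n j : ℕ) (hn : 3 ≤ n) :
    indepCount (SimpleGraph.cycleGraph n) j = cyc n j := by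
  obtain ⟨m, rfl⟩ : ∃ m, n = m + 2 := ⟨n - 2, by omega⟩
  classical
  rw [indepCount, Nat.card_eq_fintype_card, Fintype.card_subtype, cyc]
  apply Finset.card_nbij (fun t => t.image Fin.val)
  · intro t ht
    simp only [Finset.mem_coe, mem_filter, mem_univ, true_and] at ht
    obtain ⟨hcard, hind⟩ := ht
    simp only [Finset.mem_coe, mem_filter, mem_powerset]
    refine ⟨?_, ?_, ?_⟩
    · intro x hx
      rw [Finset.mem_image] at hx
      obtain ⟨a, _, rfl⟩ := hx
      rw [mem_range]; exact a.isLt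
    · rw [Finset.card_image_of_injective _ Fin.val_injective, hcard]
    · intro u hu hu1
      rw [Finset.mem_image] at hu hu1
      obtain ⟨a, ha, rfl⟩ := hu
      obtain ⟨b, hb, hba⟩ := hu1
      apply hind a ha b hb
      have hb2 : b = a + 1 := by
        rw [Fin.ext_iff, Fin.add_def, Fin.val_one]
        simpa using hba
      rw [SimpleGraph.cycleGraph_adj]
      right
      rw [hb2]
      abel
  · intro t1 h1 t2 h2 heq
    exact Finset.image_injective Fin.val_injective heq
  · intro s hs
    rw [Finset.mem_coe, mem_filter, mem_powerset] at hs
    obtain ⟨hsub, hcard, hcy⟩ := hs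
    have hlt : ∀ x ∈ s, x < m + 2 := fun x hx => mem_range.mp (hsub hx)
    rw [Set.mem_image]
    refine ⟨s.attachFin hlt, ?_, ?_⟩
    · rw [Finset.mem_coe]
      simp only [mem_filter, mem_univ, true_and]
      constructor
      · rw [Finset.card_attachFin, hcard]
      · intro a ha b hb hadj
        rw [Finset.mem_attachFin] at ha hb
        rw [SimpleGraph.cycleGraph_adj] at hadj
        rcases hadj with h | h
        · -- a - b = 1, so a = b + 1
          have hab : a = b + 1 := by rw [← h]; abel
          have : (a : ℕ) = ((b : ℕ) + 1) % (m+2) := by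
            rw [hab, Fin.add_def, Fin.val_one]
          exact hcy b hb (this ▸ ha)
        · have hab : b = a + 1 := by rw [← h]; abel
          have : (b : ℕ) = ((a : ℕ) + 1) % (m+2) := by
            rw [hab, Fin.add_def, Fin.val_one]
          exact hcy a ha (this ▸ hb)
    · ext x
      rw [Finset.mem_image]
      constructor
      · rintro ⟨a, ha, rfl⟩
        rwa [Finset.mem_attachFin] at ha
      · intro hx
        exact ⟨⟨x, hlt x hx⟩, by rwa [Finset.mem_attachFin], rfl⟩

noncomputable def cpoly (m : ℕ) : Polynomial ℚ := ∑ j ∈ Finset.range (m+1), C ((pc m j : ℚ)) * X^j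

lemma cpoly_ext (m N : ℕ) (h : m+1 ≤ N) :
    ∑ j ∈ Finset.range N, C ((pc m j : ℚ)) * X^j = cpoly m := by
  rw [cpoly]
  symm
  apply Finset.sum_subset (Finset.range_subset_range.mpr h)
  intro x _ hx
  rw [mem_range, not_lt] at hx
  rw [pc_eq_zero (by omega)]
  simp

lemma cpoly_zero : cpoly 0 = 1 := by
  simp [cpoly, pc_zero_right]

lemma cpoly_one : cpoly 1 = 1 + X := by
  rw [cpoly]
  rw [Finset.sum_range_succ, Finset.sum_range_one, pc_zero_right, pc_one_one]
  simp

lemma cpoly_rec (m : ℕ) : cpoly (m+2) = cpoly (m+1) + X * cpoly m := by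
  have h3 : (∑ j ∈ Finset.range (m+2), C ((pc (m+1) (j+1) : ℚ)) * X^(j+1)) + C ((pc (m+1) 0 : ℚ)) * X^0 = cpoly (m+1) := by
    rw [← Finset.sum_range_succ' (fun j => C ((pc (m+1) j : ℚ)) * X^j) (m+2)]
    exact cpoly_ext (m+1) (m+3) (by omega)
  have h4 : (∑ j ∈ Finset.range (m+2), C ((pc m j : ℚ)) * X^j) = cpoly m := cpoly_ext m (m+2) (by omega)
  rw [cpoly]
  rw [Finset.sum_range_succ' (fun j => C ((pc (m+2) j : ℚ)) * X^j) (m+2)]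
  have h1 : ∀ j ∈ Finset.range (m+2), C ((pc (m+2) (j+1) : ℚ)) * X^(j+1)
      = C ((pc (m+1) (j+1) : ℚ)) * X^(j+1) + X * (C ((pc m j : ℚ)) * X^j) := by
    intro j _
    rw [pc_rec]
    push_cast
    rw [Polynomial.C_add]
    ring
  rw [Finset.sum_congr rfl h1, Finset.sum_add_distrib, ← Finset.mul_sum, h4]
  rw [show ((pc (m+2) 0 : ℚ)) = ((pc (m+1) 0 : ℚ)) from by rw [pc_zero_right, pc_zero_right]]
  rw [← h3]
  ring

lemma Lp_cpoly : ∀ m, Lp (m+3) = cpoly (m+2) + X * cpoly m := by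
  intro m
  induction m using Nat.twoStepInduction with
  | zero =>
    rw [show (0:ℕ)+3 = 1+2 from by norm_num, Lp_add_two, show (1:ℕ)+1 = 0+2 from by norm_num,
      Lp_add_two, show (0:ℕ)+1 = 1 from by norm_num, Lp_one, Lp_zero,
      show (0:ℕ)+2 = 0+2 from rfl, cpoly_rec 0, show (0:ℕ)+1 = 1 from by norm_num,
      cpoly_one, cpoly_zero]
    rw [map_one, map_ofNat]
    ring
  | one =>
    rw [show (1:ℕ)+3 = 2+2 from by norm_num, Lp_add_two, show (2:ℕ)+1 = 1+2 from by norm_num,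
      Lp_add_two, show (1:ℕ)+1 = 0+2 from by norm_num, Lp_add_two,
      show (0:ℕ)+1 = 1 from by norm_num, Lp_one, Lp_zero,
      cpoly_rec 1, show (1:ℕ)+1 = 0+2 from by norm_num, cpoly_rec 0,
      show (0:ℕ)+1 = 1 from by norm_num, cpoly_one, cpoly_zero]
    rw [map_one, map_ofNat]
    ring
  | more m ih1 ih2 =>
    rw [show m+2+3 = (m+3)+2 from by ring, Lp_add_two, show m+3+1 = (m+1)+3 from by ring,
      ih2, ih1, show m+2+2 = (m+2)+2 from rfl, cpoly_rec (m+2),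
      show m+2+1 = (m+1)+2 from by ring, cpoly_rec (m+1),
      show m+1+1 = m+2 from by ring, cpoly_rec m]
    ring

lemma indepPoly_cycle (n : ℕ) (hn : 3 ≤ n) : indepPoly (SimpleGraph.cycleGraph n) = Lp n := by
  obtain ⟨m, rfl⟩ : ∃ m, n = m + 3 := ⟨n-3, by omega⟩
  rw [indepPoly, Fintype.card_fin]
  have hc : ∀ j ∈ Finset.range (m+3+1), C ((indepCount (SimpleGraph.cycleGraph (m+3)) j : ℚ)) * X^j
      = C ((cyc (m+3) j : ℚ)) * X^j := by
    intro j _; rw [indepCount_cycle_s17 _ _ (by omega)]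
  rw [Finset.sum_congr rfl hc]
  rw [Finset.sum_range_succ' (fun j => C ((cyc (m+3) j : ℚ)) * X^j) (m+3)]
  have e1 : ∀ j, pcI 1 (m+3) (j+1) = pc (m+2) (j+1) := by
    intro j
    have := pcI_eq_pc 1 (m+2) (j+1)
    rwa [show 1+(m+2) = m+3 from by ring] at this
  have e2 : ∀ j, pcI 2 (m+3-1) j = pc m j := by
    intro j
    have := pcI_eq_pc 2 m j
    rwa [show 2+m = m+3-1 from by omega] at this
  have h1 : ∀ j ∈ Finset.range (m+3), C ((cyc (m+3) (j+1) : ℚ)) * X^(j+1)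
      = C ((pc (m+2) (j+1) : ℚ)) * X^(j+1) + X * (C ((pc m j : ℚ)) * X^j) := by
    intro j _
    rw [cyc_succ _ _ (by omega), e1, e2]
    push_cast
    rw [Polynomial.C_add]
    ring
  rw [Finset.sum_congr rfl h1, Finset.sum_add_distrib, ← Finset.mul_sum]
  rw [cpoly_ext m (m+3) (by omega)]
  have h3 : (∑ j ∈ Finset.range (m+3), C ((pc (m+2) (j+1) : ℚ)) * X^(j+1)) + C ((pc (m+2) 0 : ℚ)) * X^0 = cpoly (m+2) := by
    rw [← Finset.sum_range_succ' (fun j => C ((pc (m+2) j : ℚ)) * X^j) (m+3)]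
    exact cpoly_ext (m+2) (m+4) (by omega)
  rw [show ((cyc (m+3) 0 : ℚ)) = ((pc (m+2) 0 : ℚ)) from by rw [cyc_zero, pc_zero_right]]
  rw [Lp_cpoly m, ← h3]
  ring

theorem cycle_indepPoly_dvd_iff (n k : ℕ) (hn : 3 ≤ n) (hodd : Odd n) (hk : 3 ≤ k) :
    k ∣ n ↔ indepPoly (SimpleGraph.cycleGraph k) ∣ indepPoly (SimpleGraph.cycleGraph n) := by
  rw [indepPoly_cycle n hn, indepPoly_cycle k hk]
  exact (Lp_dvd_iff (by omega) hodd).symm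
end
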